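/- arXiv:1810.11853 — 10 statements merged into one kernel-verified Lean document; each statement's English description precedes it below -/
import Mathlib

section
/- Let A be a commutative ring, a ∈ A, and M an A-module. Let (M^i)_{i≥0} be a decreasing sequence of submodules of M with M^0 = M such that: (a) M^i = a^i·M + M^{i+1} for every i ≥ 0; (b) ⋂_i M^i = 0; and (c) M is complete with respect to the filtration, i.e. for every sequence (x_k) in M with x_{k+1} − x_k ∈ M^k for all k, there exists x ∈ M with x − x_k ∈ M^k for all k. Then M^n = a^n·M for every n ≥ 0. -/
/-- Let `A` be a commutative ring, `a ∈ A`, and `M` an `A`-module equipped with a decreasing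
filtration `M = F 0 ⊇ F 1 ⊇ …` by submodules such that `F i = a^i • M + F (i+1)` for all `i`,
`⋂ i, F i = 0`, and `M` is complete with respect to the filtration. Then `F n = a^n • M`. -/
theorem stmt_0 {A : Type*} [CommRing A] {M : Type*} [AddCommGroup M] [Module A M]
    (a : A) (F : ℕ → Submodule A M)
    (h0 : F 0 = ⊤)
    (hdec : ∀ i, F (i + 1) ≤ F i)
    (ha : ∀ i, ∀ x : M, x ∈ F i ↔ ∃ m : M, ∃ y ∈ F (i + 1), x = a ^ i • m + y)
    (hsep : ∀ x : M, (∀ i, x ∈ F i) → x = 0)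
    (hcomp : ∀ x : ℕ → M, (∀ k, x (k + 1) - x k ∈ F k) →
      ∃ y : M, ∀ k, y - x k ∈ F k) :
    ∀ n : ℕ, ∀ x : M, x ∈ F n ↔ ∃ m : M, x = a ^ n • m := by
  have hmono : Antitone F := antitone_nat_of_succ_le hdec
  have hmem : ∀ i (m : M), a ^ i • m ∈ F i := fun i m =>
    (ha i _).2 ⟨m, 0, (F (i + 1)).zero_mem, by simp⟩
  intro n x
  constructor
  · intro hx
    have hstep : ∀ i (y : M), y ∈ F i →
        ∃ p : M × M, p.2 ∈ F (i + 1) ∧ y = a ^ i • p.1 + p.2 := by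
      intro i y hy
      obtain ⟨m, z, hz, he⟩ := (ha i y).1 hy
      exact ⟨(m, z), hz, he⟩
    choose step h1 h2 using hstep
    let Y : ∀ _ : ℕ, {z : M // z ∈ F (n + _)} := fun k =>
      Nat.rec (motive := fun k => {z : M // z ∈ F (n + k)}) ⟨x, by simpa using hx⟩
        (fun k p => ⟨(step (n + k) p.1 p.2).2, by
          exact h1 (n + k) p.1 p.2⟩) k
    let m : ℕ → M := fun k => (step (n + k) (Y k).1 (Y k).2).1
    have hY : ∀ k, (Y k).1 = a ^ (n + k) • m k + (Y (k + 1)).1 :=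
      fun k => h2 (n + k) (Y k).1 (Y k).2
    let s : ℕ → M := fun k => ∑ i ∈ Finset.range k, a ^ i • m i
    have hxs : ∀ k, x - a ^ n • s k = (Y k).1 := by
      intro k
      induction k with
      | zero => simp [s, Y]
      | succ k ih =>
        have hs : s (k + 1) = s k + a ^ k • m k := Finset.sum_range_succ _ _
        have hAY := hY k
        rw [hs, smul_add, smul_smul, ← pow_add]
        rw [← ih] at hAY
        have : x - a ^ n • s k = a ^ (n + k) • m k + (Y (k + 1)).1 := hAY
        abel_nf
        abel_nf at this
        linear_combination (norm := abel) this
    have hcauchy : ∀ k, s (k + 1) - s k ∈ F k := by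
      intro k
      have hs : s (k + 1) = s k + a ^ k • m k := Finset.sum_range_succ _ _
      rw [hs]
      simpa using hmem k (m k)
    obtain ⟨y, hy⟩ := hcomp s hcauchy
    refine ⟨y, ?_⟩
    have hz : ∀ k, x - a ^ n • y ∈ F k := by
      intro k
      have e : x - a ^ n • y = (x - a ^ n • s k) - a ^ n • (y - s k) := by
        rw [smul_sub]; abel
      rw [e]
      exact (F k).sub_mem (hmono (Nat.le_add_left k n) ((hxs k) ▸ (Y k).2))
        ((F k).smul_mem _ (hy k))
    have := hsep _ hz
    have : x = a ^ n • y := by linear_combination (norm := abel) this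
    exact this
  · rintro ⟨m, rfl⟩
    exact hmem n m
end

section
/- Let p be a prime and B a commutative ring with p·1_B = 0 such that B is finitely generated as a module over itself via the Frobenius ring homomorphism Fr : B → B, Fr(b) = b^p. Fix an integer n ≥ 1 and let C be the tensor product over 𝔽_p of n+1 copies of B. Let μ : C → B be the multiplication homomorphism, J := Ker μ, and let J' ⊆ C be the ideal generated by the set {c^p : c ∈ J}. Then the image of J in C/J' is a finitely generated ideal of C/J'. -/
open scoped TensorProduct

/-- The multiplication homomorphism from the tensor product (over `R`) of `ι`-many
copies of a commutative `R`-algebra `B` to `B`. -/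
noncomputable def tensorMulMap (R B : Type*) [CommRing R] [CommRing B] [Algebra R B]
    (ι : Type*) [Fintype ι] : (⨂[R] (_ : ι), B) →ₐ[R] B :=
  PiTensorProduct.liftAlgHom (MultilinearMap.mkPiAlgebra R ι B)
    (by simp) (fun x y => by simp [Finset.prod_mul_distrib])

theorem tensorMulMap_single (R B : Type*) [CommRing R] [CommRing B] [Algebra R B]
    (ι : Type*) [Fintype ι] [DecidableEq ι] (i : ι) (b : B) :
    tensorMulMap R B ι (PiTensorProduct.singleAlgHom i b) = b := by
  simp only [tensorMulMap, PiTensorProduct.singleAlgHom_apply,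
    PiTensorProduct.liftAlgHom_apply, PiTensorProduct.lift.tprod,
    MultilinearMap.mkPiAlgebra_apply]
  erw [PiTensorProduct.liftAlgHom_apply, PiTensorProduct.lift.tprod, MultilinearMap.mkPiAlgebra_apply]
  rw [Fintype.prod_eq_single i (fun j hj => by
    simp [MonoidHom.mulSingle_apply, Pi.mulSingle, Function.update_of_ne hj])]
  simp

/-- Let `p` be a prime and `B` a commutative ring with `p·1 = 0` (i.e. a `ZMod p`-algebra)
such that `B` is finitely generated as a module over itself via the Frobenius homomorphism
`b ↦ b^p`. Let `C` be the tensor product over `𝔽_p` of `n+1` copies of `B`, `μ : C → B`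
the multiplication homomorphism, `J := Ker μ`, and `J' ⊆ C` the ideal generated by
`{c^p : c ∈ J}`. Then the image of `J` in `C/J'` is a finitely generated ideal. -/
theorem stmt_1 (p : ℕ) (hp : p.Prime) (B : Type*) [CommRing B] [Algebra (ZMod p) B]
    (hfin : ∃ s : Finset B, ∀ b : B, ∃ c : B → B, b = ∑ g ∈ s, (c g) ^ p * g)
    (n : ℕ) (hn : 1 ≤ n)
    (J J' : Ideal (⨂[ZMod p] (_ : Fin (n + 1)), B))
    (hJ : J = RingHom.ker (tensorMulMap (ZMod p) B (Fin (n + 1))))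
    (hJ' : J' = Ideal.span {x | ∃ c ∈ J, x = c ^ p}) :
    (Ideal.map (Ideal.Quotient.mk J') J).FG := by
  classical
  obtain ⟨s, hs⟩ := hfin
  set C := ⨂[ZMod p] (_ : Fin (n + 1)), B with hC
  set μ := tensorMulMap (ZMod p) B (Fin (n + 1)) with hμ
  set ι : Fin (n + 1) → (B →ₐ[ZMod p] C) := fun i => PiTensorProduct.singleAlgHom (A := fun _ : Fin (n + 1) => B) i with hι
  have hμι : ∀ (i : Fin (n + 1)) (b : B), μ (ι i b) = b := fun i b =>
    tensorMulMap_single (ZMod p) B (Fin (n + 1)) i b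
  -- the set of canonical generators of J
  set D : Set C := {x | ∃ i b, x = ι i b - ι 0 b} with hD
  have hDJ : D ⊆ (J : Set C) := by
    rintro x ⟨i, b, rfl⟩
    rw [hJ, SetLike.mem_coe, RingHom.mem_ker, map_sub, hμι, hμι, sub_self]
  -- J is generated by D
  have hJD : J = Ideal.span D := by
    refine le_antisymm ?_ (Ideal.span_le.mpr hDJ)
    intro x hx
    have key : (Ideal.Quotient.mkₐ (ZMod p) (Ideal.span D)) =
        ((Ideal.Quotient.mkₐ (ZMod p) (Ideal.span D)).comp (ι 0)).comp μ := by
      apply PiTensorProduct.algHom_ext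
      intro i
      ext b
      simp only [AlgHom.comp_apply, Ideal.Quotient.mkₐ_eq_mk]
      show Ideal.Quotient.mk _ (ι i b) = Ideal.Quotient.mk _ (ι 0 (μ (ι i b)))
      rw [hμι, Ideal.Quotient.eq]
      exact Ideal.subset_span ⟨i, b, rfl⟩
    have hx0 : μ x = 0 := by rw [hJ] at hx; exact hx
    have := congrArg (fun f => f x) key
    simp only [AlgHom.comp_apply, Ideal.Quotient.mkₐ_eq_mk, hx0, map_zero] at this
    rwa [← Ideal.Quotient.eq_zero_iff_mem]
  -- the finite generating set
  set T : Finset (C ⧸ J') :=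
    (Finset.univ ×ˢ s).image
      (fun ig : Fin (n + 1) × B => Ideal.Quotient.mk J' (ι ig.1 ig.2 - ι 0 ig.2)) with hT
  refine ⟨T, ?_⟩
  by_cases hss : Subsingleton C
  · have : Subsingleton (C ⧸ J') := Ideal.Quotient.subsingleton_iff.mpr (Subsingleton.elim _ _)
    apply Subsingleton.elim
  · haveI : Nontrivial C := not_subsingleton_iff_nontrivial.mp hss
    haveI := Fact.mk hp
    haveI : CharP C p := charP_of_injective_algebraMap (algebraMap (ZMod p) C).injective p
    apply le_antisymm
    · -- span T ≤ map mk J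
      refine Ideal.span_le.mpr ?_
      rintro _ hx
      simp only [hT, Finset.coe_image, Set.mem_image, Finset.mem_coe] at hx
      obtain ⟨⟨i, g⟩, _, rfl⟩ := hx
      exact Ideal.mem_map_of_mem _ (hDJ ⟨i, g, rfl⟩)
    · -- map mk J ≤ span T
      rw [hJD, Ideal.map_span]
      refine Ideal.span_le.mpr ?_
      rintro _ ⟨_, ⟨i, b, rfl⟩, rfl⟩
      obtain ⟨c, hc⟩ := hs b
      have hsum : ι i b - ι 0 b
          = ∑ g ∈ s, (ι i (c g) ^ p * ι i g - ι 0 (c g) ^ p * ι 0 g) := by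
        rw [Finset.sum_sub_distrib, hc]
        simp [map_sum, map_mul, map_pow]
      rw [hsum, map_sum]
      refine Ideal.sum_mem _ (fun g hg => ?_)
      have h1 : ι i (c g) ^ p * ι i g - ι 0 (c g) ^ p * ι 0 g
          = ι i (c g) ^ p * (ι i g - ι 0 g) + (ι i (c g) - ι 0 (c g)) ^ p * ι 0 g := by
        rw [sub_pow_char]; ring
      rw [h1, map_add]
      have h2 : Ideal.Quotient.mk J' ((ι i (c g) - ι 0 (c g)) ^ p * ι 0 g) = 0 := by
        rw [Ideal.Quotient.eq_zero_iff_mem]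
        refine J'.mul_mem_right _ ?_
        rw [hJ']
        exact Ideal.subset_span ⟨_, hDJ ⟨i, c g, rfl⟩, rfl⟩
      rw [h2, add_zero, map_mul]
      refine Ideal.mul_mem_left _ _ (Ideal.subset_span ?_)
      exact Finset.mem_image.mpr ⟨(i, g), Finset.mem_product.mpr ⟨Finset.mem_univ _, hg⟩, rfl⟩
end

section
/- Let p be a prime and B a commutative ring with p·1_B = 0 such that B is finitely generated as a module over itself via the Frobenius ring homomorphism b ↦ b^p. Fix an integer n ≥ 1, let C be the tensor product over 𝔽_p of n+1 copies of B, let μ : C → B be the multiplication homomorphism, J := Ker μ, and let J' ⊆ C be the ideal generated by {c^p : c ∈ J}. Then there exists an integer N ≥ 1 with J^N ⊆ J'. -/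
open scoped TensorProduct

lemma tensorMulMap_singleAlgHom (R B : Type*) [CommRing R] [CommRing B] [Algebra R B]
    (ι : Type*) [Fintype ι] [DecidableEq ι] (i : ι) (b : B) :
    tensorMulMap R B ι
      (PiTensorProduct.singleAlgHom (R := R) (A := fun _ : ι => B) i b) = b := by
  simp only [PiTensorProduct.singleAlgHom_apply, tensorMulMap,
    PiTensorProduct.liftAlgHom, AlgHom.ofLinearMap_apply, PiTensorProduct.lift.tprod,
    MultilinearMap.mkPiAlgebra_apply, MonoidHom.mulSingle_apply]
  exact Fintype.prod_pi_mulSingle' i b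

open scoped TensorProduct in
lemma tprod_eq_prod_singleAlgHom (R B : Type*) [CommRing R] [CommRing B] [Algebra R B]
    (ι : Type*) [Fintype ι] [DecidableEq ι] (f : ι → B) :
    (PiTensorProduct.tprod R) f =
      ∏ j, PiTensorProduct.singleAlgHom (R := R) (A := fun _ : ι => B) j (f j) := by
  simp only [PiTensorProduct.singleAlgHom_apply]
  rw [← PiTensorProduct.tprod_prod]
  congr 1
  funext k
  rw [Finset.prod_apply]
  simp only [MonoidHom.mulSingle_apply]
  exact (Fintype.prod_pi_mulSingle k f).symm

set_option maxHeartbeats 1000000 in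
set_option synthInstance.maxHeartbeats 200000 in
/-- Let `p` be a prime and `B` a commutative ring with `p·1 = 0` (i.e. a `ZMod p`-algebra)
such that `B` is finitely generated as a module over itself via the Frobenius homomorphism
`b ↦ b^p`. Let `C` be the tensor product over `𝔽_p` of `n+1` copies of `B`, `μ : C → B`
the multiplication homomorphism, `J := Ker μ`, and `J' ⊆ C` the ideal generated by
`{c^p : c ∈ J}`. Then there exists an integer `N ≥ 1` with `J^N ⊆ J'`. -/
theorem stmt_2 (p : ℕ) (hp : p.Prime) (B : Type*) [CommRing B] [Algebra (ZMod p) B]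
    (hfin : ∃ s : Finset B, ∀ b : B, ∃ c : B → B, b = ∑ g ∈ s, (c g) ^ p * g)
    (n : ℕ) (hn : 1 ≤ n)
    (J J' : Ideal (⨂[ZMod p] (_ : Fin (n + 1)), B))
    (hJ : J = RingHom.ker (tensorMulMap (ZMod p) B (Fin (n + 1))))
    (hJ' : J' = Ideal.span {x | ∃ c ∈ J, x = c ^ p}) :
    ∃ N : ℕ, 1 ≤ N ∧ J ^ N ≤ J' := by
  classical
  haveI : Fact p.Prime := ⟨hp⟩
  set C := ⨂[ZMod p] (_ : Fin (n + 1)), B with hC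
  -- trivial case
  rcases subsingleton_or_nontrivial C with htriv | hnontriv
  · refine ⟨1, le_refl 1, ?_⟩
    intro x _
    have : x = 0 := Subsingleton.elim x 0
    simp [this]
  haveI : CharP C p :=
    charP_of_injective_algebraMap (algebraMap (ZMod p) C).injective p
  obtain ⟨s, hs⟩ := hfin
  set μ := tensorMulMap (ZMod p) B (Fin (n + 1)) with hμ
  set ι : Fin (n + 1) → (B →ₐ[ZMod p] C) :=
    fun i => PiTensorProduct.singleAlgHom (R := ZMod p) (A := fun _ : Fin (n + 1) => B) i with hι
  -- μ ∘ ι i = id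
  have hμι : ∀ (i : Fin (n + 1)) (b : B), μ (ι i b) = b := by
    intro i b
    exact tensorMulMap_singleAlgHom (ZMod p) B (Fin (n + 1)) i b
  -- the standard differences lie in J
  have hdJ : ∀ (i : Fin (n + 1)) (b : B), ι i b - ι 0 b ∈ J := by
    intro i b
    rw [hJ, RingHom.mem_ker]
    simp [map_sub, hμι]
  -- finite generating set of differences
  set T : Finset C :=
    (Finset.univ ×ˢ s).image (fun ig : Fin (n + 1) × B => ι ig.1 ig.2 - ι 0 ig.2) with hT
  set K : Ideal C := Ideal.span (T : Set C) ⊔ J' with hK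
  have hTK : ∀ (i : Fin (n + 1)), ∀ g ∈ s, ι i g - ι 0 g ∈ K := by
    intro i g hg
    refine le_sup_left (α := Ideal C) ?_
    exact Ideal.subset_span (Finset.mem_coe.mpr (Finset.mem_image.mpr
      ⟨⟨i, g⟩, Finset.mem_product.mpr ⟨Finset.mem_univ _, hg⟩, rfl⟩))
  have hJ'K : ∀ c ∈ J, c ^ p ∈ K := by
    intro c hc
    exact le_sup_right (α := Ideal C) (hJ' ▸ Ideal.subset_span ⟨c, hc, rfl⟩)
  -- key: all differences lie in K
  have key : ∀ (i : Fin (n + 1)) (b : B), ι i b - ι 0 b ∈ K := by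
    intro i b
    obtain ⟨c, hc⟩ := hs b
    rw [hc, map_sum, map_sum, ← Finset.sum_sub_distrib]
    refine Ideal.sum_mem K ?_
    intro g hg
    have heq : ι i (c g ^ p * g) - ι 0 (c g ^ p * g)
        = ι i (c g) ^ p * (ι i g - ι 0 g) + (ι i (c g) - ι 0 (c g)) ^ p * ι 0 g := by
      rw [map_mul, map_mul, map_pow, map_pow, sub_pow_char]
      ring
    rw [heq]
    exact K.add_mem (K.mul_mem_left _ (hTK i g hg))
      (K.mul_mem_right _ (hJ'K _ (hdJ i (c g))))
  -- the composite B → C → C/K is surjective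
  set q := Ideal.Quotient.mkₐ (ZMod p) K with hq
  have hqeq : ∀ (i : Fin (n + 1)) (b : B), q (ι i b) = q (ι 0 b) := by
    intro i b
    rw [hq]
    exact Ideal.Quotient.eq.mpr (key i b)
  have hsurj : ∀ z : C, ∃ b : B, q z = q (ι 0 b) := by
    intro z
    induction z using PiTensorProduct.induction_on with
    | smul_tprod r f =>
      refine ⟨r • ∏ j, f j, ?_⟩
      have h1 : (PiTensorProduct.tprod (ZMod p)) f = ∏ j, ι j (f j) :=
        tprod_eq_prod_singleAlgHom (ZMod p) B (Fin (n + 1)) f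
      have hb : q ((PiTensorProduct.tprod (ZMod p)) f) = q (ι 0 (∏ j, f j)) := by
        rw [h1, map_prod, map_prod, map_prod]
        exact Finset.prod_congr rfl fun j _ => hqeq j (f j)
      simp only [Algebra.smul_def, map_mul, AlgHom.commutes, hb]
      exact congrArg (· * q (ι 0 (∏ j, f j))) (q.commutes r)
    | add x y hx hy =>
      obtain ⟨b1, h1⟩ := hx
      obtain ⟨b2, h2⟩ := hy
      exact ⟨b1 + b2, by rw [map_add, h1, h2, map_add, map_add]⟩
  -- K ≤ J
  have hKJ : K ≤ J := by
    rw [hK]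
    refine sup_le ?_ ?_
    · rw [Ideal.span_le]
      intro x hx
      obtain ⟨⟨i, g⟩, _, rfl⟩ := Finset.mem_image.mp (Finset.mem_coe.mp hx)
      exact hdJ i g
    · rw [hJ', Ideal.span_le]
      rintro x ⟨c, hc, rfl⟩
      exact Ideal.pow_mem_of_mem J hc p hp.pos
  -- J ≤ K
  have hJK : J ≤ K := by
    intro c hc
    obtain ⟨b, hb⟩ := hsurj c
    have hsub : c - ι 0 b ∈ K := Ideal.Quotient.eq.mp hb
    have hb0 : b = 0 := by
      have h1 : ι 0 b ∈ J := by
        have : ι 0 b = c - (c - ι 0 b) := by ring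
        rw [this]
        exact J.sub_mem hc (hKJ hsub)
      have := hJ ▸ h1
      rw [RingHom.mem_ker] at this
      rwa [hμι 0 b] at this
    rw [hb0] at hsub
    simpa using hsub
  -- span T is contained in the radical of J'
  have hrad : Ideal.span (T : Set C) ≤ J'.radical := by
    rw [Ideal.span_le]
    intro x hx
    obtain ⟨⟨i, g⟩, _, rfl⟩ := Finset.mem_image.mp (Finset.mem_coe.mp hx)
    exact ⟨p, hJ' ▸ Ideal.subset_span ⟨_, hdJ i g, rfl⟩⟩
  obtain ⟨m, hm⟩ := Ideal.exists_pow_le_of_le_radical_of_fg hrad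
    ⟨T, by simp⟩
  refine ⟨m + 1, Nat.le_add_left 1 m, ?_⟩
  -- pass to C/J'
  have hTm : Ideal.span (T : Set C) ^ (m + 1) ≤ J' :=
    le_trans (Ideal.pow_le_pow_right (Nat.le_succ m)) hm
  set q' := Ideal.Quotient.mk J' with hq'
  have hmap : Ideal.map q' (J ^ (m + 1)) = ⊥ := by
    rw [Ideal.map_pow]
    have h1 : Ideal.map q' J ≤ Ideal.map q' K := Ideal.map_mono hJK
    have h2 : Ideal.map q' K = Ideal.map q' (Ideal.span (T : Set C)) := by
      rw [hK, Ideal.map_sup, Ideal.map_quotient_self, sup_bot_eq]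
    have h3 : (Ideal.map q' J) ^ (m + 1) ≤
        (Ideal.map q' (Ideal.span (T : Set C))) ^ (m + 1) :=
      Ideal.pow_right_mono (h2 ▸ h1) _
    have h4 : (Ideal.map q' (Ideal.span (T : Set C))) ^ (m + 1) = ⊥ := by
      rw [← Ideal.map_pow]
      rw [← le_bot_iff]
      calc Ideal.map q' (Ideal.span (T : Set C) ^ (m + 1))
          ≤ Ideal.map q' J' := Ideal.map_mono hTm
        _ = ⊥ := Ideal.map_quotient_self J'
    rw [← le_bot_iff]
    exact h4 ▸ h3
  have : J ^ (m + 1) ≤ Ideal.comap q' ⊥ := Ideal.map_le_iff_le_comap.mp (le_of_eq hmap)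
  rwa [← RingHom.ker_eq_comap_bot, Ideal.mk_ker] at this
end

section
/- Let p be a prime. Let B̃ be a commutative ring in which p is a non-zero-divisor and which is p-adically complete and separated (the canonical map B̃ → lim_r B̃/p^r B̃ is bijective). Set B := B̃/pB̃, and suppose x̃_1, …, x̃_m ∈ B̃ are elements whose images x_1,…,x_m in B form a p-basis of B. Let D_1, …, D_m : B̃ → B̃ be derivations with D_i(x̃_j) = δ_{ij} (Kronecker delta). Then for every i ∈ {1,…,m}, every integer l ≥ 0, and every f ∈ B̃, one has D_i^l(f) ∈ l!·B̃. -/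
section helpers
variable {B' : Type*} [CommRing B'] (D : Derivation ℤ B' B')

lemma myIterAdd (l : ℕ) (a b : B') :
    (⇑D)^[l] (a + b) = (⇑D)^[l] a + (⇑D)^[l] b := by
  induction l with
  | zero => simp
  | succ l ih =>
      simp only [Function.iterate_succ_apply', ih, map_add]

lemma myIterConstMul (c : B') (hc : D c = 0) (l : ℕ) (a : B') :
    (⇑D)^[l] (c * a) = c * (⇑D)^[l] a := by
  induction l with
  | zero => simp
  | succ l ih =>
      simp only [Function.iterate_succ_apply', ih, Derivation.leibniz, hc,
        smul_eq_mul, mul_zero, add_zero]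

lemma myIterZero (l : ℕ) : (⇑D)^[l] 0 = 0 := by
  induction l with
  | zero => simp
  | succ l ih => simp [Function.iterate_succ_apply', ih]

lemma myKey (x u c : B') (hx : D x = 1) (hc : D c = 0)
    (hu : ∀ k, 1 ≤ k → ∃ w, (⇑D)^[k] u = c * w) (a : ℕ) :
    ∀ l : ℕ, ∃ h, (⇑D)^[l] (u * x ^ a)
      = ((l.factorial * a.choose l : ℕ) : B') * (u * x ^ (a - l)) + c * h := by
  intro l
  induction l with
  | zero => exact ⟨0, by simp⟩
  | succ l ih =>
      obtain ⟨h, eh⟩ := ih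
      obtain ⟨w, hw⟩ := hu 1 le_rfl
      simp only [Function.iterate_one] at hw
      refine ⟨((l.factorial * a.choose l : ℕ) : B') * (w * x ^ (a - l)) + D h, ?_⟩
      rw [Function.iterate_succ_apply', eh]
      have hd : D (u * x ^ (a - l))
          = ((a - l : ℕ) : B') * (u * x ^ (a - (l + 1))) + c * (w * x ^ (a - l)) := by
        rw [Derivation.leibniz, Derivation.leibniz_pow, hx, hw]
        simp only [smul_eq_mul, mul_one]
        have : a - l - 1 = a - (l + 1) := by omega
        rw [this]; ring
      have hnat : (l+1).factorial * a.choose (l+1)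
          = l.factorial * a.choose l * (a - l) := by
        rw [Nat.factorial_succ]
        calc (l+1) * l.factorial * a.choose (l+1)
            = l.factorial * (a.choose (l+1) * (l+1)) := by ring
          _ = l.factorial * (a.choose l * (a - l)) := by
              rw [Nat.choose_succ_right_eq]
          _ = l.factorial * a.choose l * (a - l) := by ring
      rw [map_add]
      have h1 : D (((l.factorial * a.choose l : ℕ) : B') * (u * x ^ (a - l)))
          = ((l.factorial * a.choose l : ℕ) : B') * D (u * x ^ (a - l)) := by
        rw [Derivation.leibniz, Derivation.map_natCast, smul_eq_mul, smul_eq_mul,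
          mul_zero, add_zero]
      have h2 : D (c * h) = c * D h := by
        rw [Derivation.leibniz, hc, smul_eq_mul, smul_eq_mul, mul_zero, add_zero]
      rw [h1, h2, hd, hnat]
      push_cast
      ring

def pbGen (p : ℕ) {B' : Type*} [CommRing B'] {m : ℕ} (x : Fin m → B') (n : ℕ) : Set B' :=
  {z | ∃ (c : B') (α : Fin m → ℕ), z = c ^ (p ^ n) * ∏ j, x j ^ (α j)}

variable {p : ℕ} {m : ℕ} (x : Fin m → B')

lemma pbGen_mul_monomial {n : ℕ} {G : B'} (hG : G ∈ AddSubmonoid.closure (pbGen p x n))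
    (α : Fin m → ℕ) : G * ∏ j, x j ^ (α j) ∈ AddSubmonoid.closure (pbGen p x n) := by
  induction hG using AddSubmonoid.closure_induction with
  | mem z hz =>
      obtain ⟨c, β, rfl⟩ := hz
      apply AddSubmonoid.subset_closure
      refine ⟨c, β + α, ?_⟩
      rw [mul_assoc, ← Finset.prod_mul_distrib]
      simp [pow_add]
  | zero => simpa using AddSubmonoid.zero_mem _
  | add a b _ _ ha hb =>
      rw [add_mul]
      exact AddSubmonoid.add_mem _ ha hb

lemma pbGen_pow_p (hp : p.Prime) {n : ℕ} {G : B'}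
    (hG : G ∈ AddSubmonoid.closure (pbGen p x n)) :
    ∃ G' ∈ AddSubmonoid.closure (pbGen p x (n + 1)), ∃ w, G ^ p = G' + (p : B') * w := by
  induction hG using AddSubmonoid.closure_induction with
  | mem z hz =>
      obtain ⟨c, β, rfl⟩ := hz
      refine ⟨c ^ (p ^ (n + 1)) * ∏ j, x j ^ (β j * p),
        AddSubmonoid.subset_closure ⟨c, fun j => β j * p, rfl⟩, 0, ?_⟩
      rw [mul_pow, ← pow_mul, ← pow_succ, ← Finset.prod_pow]
      simp [pow_mul]
  | zero =>
      exact ⟨0, AddSubmonoid.zero_mem _, 0, by simp [zero_pow hp.ne_zero]⟩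
  | add a b _ _ ha hb =>
      obtain ⟨Ga, hGa, wa, hwa⟩ := ha
      obtain ⟨Gb, hGb, wb, hwb⟩ := hb
      obtain ⟨r, hr⟩ := exists_add_pow_prime_eq hp a b
      exact ⟨Ga + Gb, AddSubmonoid.add_mem _ hGa hGb, wa + wb + a * b * r,
        by rw [hr, hwa, hwb]; ring⟩

lemma pbGen_deriv (i : Fin m) (hxi : D (x i) = 1) (hxj : ∀ j, j ≠ i → D (x j) = 0)
    (n l : ℕ) {G : B'} (hG : G ∈ AddSubmonoid.closure (pbGen p x n)) :
    ∃ g h, (⇑D)^[l] G = (l.factorial : B') * g + ((p : B') ^ n) * h := by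
  induction hG using AddSubmonoid.closure_induction with
  | zero => exact ⟨0, 0, by simp [myIterZero]⟩
  | add a b _ _ ha hb =>
      obtain ⟨ga, wa, hwa⟩ := ha
      obtain ⟨gb, wb, hwb⟩ := hb
      exact ⟨ga + gb, wa + wb, by rw [myIterAdd, hwa, hwb]; ring⟩
  | mem z hz =>
      obtain ⟨c, α, rfl⟩ := hz
      set y : B' := ∏ j ∈ Finset.univ.erase i, x j ^ (α j) with hy
      have hDy : D y = 0 := by
        refine Finset.prod_induction _ (fun t => D t = 0) (fun a b ha hb => ?_)
          (Derivation.map_one_eq_zero D) (fun j hj => ?_)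
        · show D (a * b) = 0
          rw [Derivation.leibniz, ha, hb, smul_zero, smul_zero, add_zero]
        · show D (x j ^ α j) = 0
          rw [Derivation.leibniz_pow, hxj j (Finset.ne_of_mem_erase hj), smul_zero, smul_zero]
      have hDpn : D ((p : B') ^ n) = 0 := by
        have : ((p : B') ^ n) = ((p ^ n : ℕ) : B') := by push_cast; ring
        rw [this, Derivation.map_natCast]
      set u : B' := c ^ (p ^ n) * y with huu
      have hu : ∀ k, 1 ≤ k → ∃ w, (⇑D)^[k] u = ((p : B') ^ n) * w := by
        intro k hk
        have hDu : D u = ((p : B') ^ n) * (y * (c ^ (p ^ n - 1) * D c)) := by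
          rw [huu, Derivation.leibniz, hDy, smul_zero, zero_add, Derivation.leibniz_pow]
          simp only [smul_eq_mul]
          ring
        obtain ⟨k, rfl⟩ : ∃ k', k = k' + 1 := ⟨k - 1, by omega⟩
        refine ⟨(⇑D)^[k] (y * (c ^ (p ^ n - 1) * D c)), ?_⟩
        rw [Function.iterate_succ_apply, hDu, myIterConstMul D _ hDpn]
      have hz : c ^ (p ^ n) * ∏ j, x j ^ (α j) = u * (x i) ^ (α i) := by
        rw [huu, hy, mul_assoc, mul_comm y, ← Finset.mul_prod_erase Finset.univ _ (Finset.mem_univ i)]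
      obtain ⟨h, hh⟩ := myKey D (x i) u ((p : B') ^ n) hxi hDpn hu (α i) l
      refine ⟨((α i).choose l : B') * (u * (x i) ^ (α i - l)), h, ?_⟩
      rw [hz, hh, Nat.cast_mul]
      ring

end helpers


/-- Let `p` be a prime and `B̃` a commutative ring in which `p` is a non-zero-divisor and which
is `p`-adically complete and separated. Set `B := B̃/pB̃` and suppose `x̃ 0, …, x̃ (m-1) ∈ B̃` have
images in `B` forming a `p`-basis. Let `D 0, …, D (m-1)` be derivations of `B̃` with
`D i (x̃ j) = δ_{ij}`. Then `D_i^l(f) ∈ l!·B̃` for all `i`, `l ≥ 0` and `f ∈ B̃`. -/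
theorem stmt_4 (p : ℕ) (hp : p.Prime) (B' : Type*) [CommRing B']
    (hreg : ∀ x : B', (p : B') * x = 0 → x = 0)
    (hcomplete : IsAdicComplete (Ideal.span {(p : B')}) B')
    (m : ℕ) (x : Fin m → B')
    (hbasis : ∀ b : B' ⧸ Ideal.span {(p : B')},
      ∃! f : (Fin m → Fin p) → B' ⧸ Ideal.span {(p : B')},
        b = ∑ α : Fin m → Fin p, (f α) ^ p *
          ∏ j, (Ideal.Quotient.mk (Ideal.span {(p : B')}) (x j)) ^ (α j : ℕ))
    (D : Fin m → Derivation ℤ B' B')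
    (hD : ∀ i j, D i (x j) = if i = j then 1 else 0) :
    ∀ (i : Fin m) (l : ℕ) (f : B'), ∃ g : B', (⇑(D i))^[l] f = (l.factorial : B') * g := by
  classical
  intro i l f
  -- Step 1: every element decomposes as (element of `A n`) + p * h.
  have L1 : ∀ (n : ℕ) (f : B'),
      ∃ G ∈ AddSubmonoid.closure (pbGen p x n), ∃ h, f = G + (p : B') * h := by
    intro n
    induction n with
    | zero =>
        intro f
        refine ⟨f, AddSubmonoid.subset_closure ⟨f, 0, by simp⟩, 0, by ring⟩
    | succ n ih =>
        intro f
        obtain ⟨cbar, hcbar, -⟩ := hbasis (Ideal.Quotient.mk (Ideal.span {(p : B')}) f)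
        choose clift hclift using fun α => Ideal.Quotient.mk_surjective (cbar α)
        set F : B' := ∑ α : Fin m → Fin p, (clift α) ^ p * ∏ j, x j ^ ((α j : ℕ)) with hF
        have hdiff : ∃ h0, f = F + (p : B') * h0 := by
          have hmk : Ideal.Quotient.mk (Ideal.span {(p : B')}) f
              = Ideal.Quotient.mk (Ideal.span {(p : B')}) F := by
            rw [hcbar, hF, map_sum]
            refine Finset.sum_congr rfl fun α _ => ?_
            rw [map_mul, map_pow, map_prod, hclift]
            congr 1
          obtain ⟨a, ha⟩ := Ideal.mem_span_singleton'.mp (Ideal.Quotient.eq.mp hmk)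
          exact ⟨a, by rw [mul_comm, ha]; ring⟩
        obtain ⟨h0, hh0⟩ := hdiff
        choose Gb hGb hb hhb using fun α => ih (clift α)
        have hpow : ∀ α : Fin m → Fin p, ∃ G' ∈ AddSubmonoid.closure (pbGen p x (n + 1)),
            ∃ s, (clift α) ^ p = G' + (p : B') * s := by
          intro α
          obtain ⟨r, hr⟩ := exists_add_pow_prime_eq hp (Gb α) ((p : B') * hb α)
          obtain ⟨G', hG', w, hw⟩ := pbGen_pow_p x hp (hGb α)
          refine ⟨G', hG', w + ((p : B') ^ (p - 1) * (hb α) ^ p + (p : B') * hb α * Gb α * r), ?_⟩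
          have hpp : (p : B') * (p : B') ^ (p - 1) = (p : B') ^ p := by
            rw [← pow_succ', Nat.sub_add_cancel hp.pos]
          rw [hhb α, hr, hw, mul_pow, ← hpp]
          ring
        choose G' hG' s hs using hpow
        refine ⟨∑ α : Fin m → Fin p, G' α * ∏ j, x j ^ ((α j : ℕ)),
          AddSubmonoid.sum_mem _ fun α _ =>
            pbGen_mul_monomial x (hG' α) (fun j => (α j : ℕ)),
          (∑ α : Fin m → Fin p, s α * ∏ j, x j ^ ((α j : ℕ))) + h0, ?_⟩
        rw [hh0, hF]
        rw [Finset.sum_congr rfl fun α (_ : α ∈ Finset.univ) => by rw [hs α]]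
        rw [Finset.sum_congr rfl fun α (_ : α ∈ Finset.univ) =>
          (add_mul (G' α) ((p : B') * s α) (∏ j, x j ^ ((α j : ℕ)))),
          Finset.sum_add_distrib]
        simp only [mul_add, Finset.mul_sum, mul_assoc]
        ring
  -- Step 2: the main approximation claim.
  have main : ∀ (r : ℕ) (f : B') (l : ℕ), ∃ g h,
      (⇑(D i))^[l] f = (l.factorial : B') * g + (p : B') ^ r * h := by
    intro r
    induction r with
    | zero => intro f l; exact ⟨0, (⇑(D i))^[l] f, by simp⟩
    | succ r ih =>
        intro f l
        obtain ⟨G, hG, h1, hf⟩ := L1 (r + 1) f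
        have hxi : (D i) (x i) = 1 := by rw [hD i i, if_pos rfl]
        have hxj : ∀ j, j ≠ i → (D i) (x j) = 0 := fun j hj => by
          rw [hD i j, if_neg (fun h => hj h.symm)]
        obtain ⟨g1, w1, hw1⟩ := pbGen_deriv (D i) x i hxi hxj (r + 1) l hG
        obtain ⟨g2, w2, hw2⟩ := ih h1 l
        have hDp : (D i) ((p : B')) = 0 := Derivation.map_natCast (D i) p
        refine ⟨g1 + (p : B') * g2, w1 + w2, ?_⟩
        rw [hf, myIterAdd, hw1, myIterConstMul (D i) _ hDp, hw2]
        ring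
  -- Step 3: extract the exact divisibility using that `l!/p^v` is a unit.
  set v := (Nat.factorial l).factorization p with hv
  set u := Nat.factorial l / p ^ v with huu
  have hfac : p ^ v * u = Nat.factorial l := Nat.ordProj_mul_ordCompl_eq_self _ p
  have hnd : ¬ p ∣ u := Nat.not_dvd_ordCompl hp (Nat.factorial_ne_zero l)
  have hple : Ideal.span {(p : B')} ≤ (⊥ : Ideal B').jacobson :=
    IsAdicComplete.le_jacobson_bot _
  have hpmem : (p : B') ∈ (⊥ : Ideal B').jacobson :=
    hple (Ideal.subset_span (Set.mem_singleton _))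
  have hcop : Nat.Coprime p u := (Nat.Prime.coprime_iff_not_dvd hp).mpr hnd
  have hbez : (1 : ℤ) = p * Nat.gcdA p u + u * Nat.gcdB p u := by
    have := Nat.gcd_eq_gcd_ab p u
    rwa [Nat.Coprime.gcd_eq_one hcop] at this
  have hB : (1 : B') = (p : B') * ((Nat.gcdA p u : ℤ) : B')
      + (u : B') * ((Nat.gcdB p u : ℤ) : B') := by
    exact_mod_cast congrArg (fun z : ℤ => (z : B')) hbez
  have hunit : IsUnit ((u : B')) := by
    have h2 := Ideal.mem_jacobson_bot.mp hpmem (-((Nat.gcdA p u : ℤ) : B'))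
    have heq : (p : B') * (-((Nat.gcdA p u : ℤ) : B')) + 1
        = (u : B') * ((Nat.gcdB p u : ℤ) : B') := by linear_combination hB
    rw [heq] at h2
    exact isUnit_of_mul_isUnit_left h2
  obtain ⟨uinv, huinv⟩ := hunit.exists_right_inv
  obtain ⟨g, h, hgh⟩ := main (v + 1) f l
  refine ⟨g + (p : B') * (uinv * h), ?_⟩
  have hl : (l.factorial : B') = (p : B') ^ v * (u : B') := by
    rw [← hfac]; push_cast; ring
  rw [hgh, hl]
  linear_combination (-((p : B') ^ (v + 1)) * h) * huinv
end

section
/- Let R be a commutative ring, D : R → R a derivation, and l ≥ 1 an integer. Let ∇ : R^l → R^l be an additive map satisfying the Leibniz rule ∇(a·v) = D(a)·v + a·∇(v) for all a ∈ R and v ∈ R^l. Let N ⊆ R^l be an R-submodule with ∇(N) ⊆ N. For an integer s with 0 ≤ s ≤ l, let I_s ⊆ R be the ideal generated by all elements g(n_1, …, n_s), where g ranges over all alternating R-multilinear maps (R^l)^s → R and n_1, …, n_s ∈ N. Then D(I_s) ⊆ I_s. -/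
open Function

/-- The "covariant derivative" of an alternating map `g` along the connection `nabla`:
`v ↦ D (g v) - ∑ j, g (update v j (nabla (v j)))`. This is again alternating multilinear. -/
def altD {R : Type*} [CommRing R] (D : Derivation ℤ R R) {l s : ℕ}
    (nabla : (Fin l → R) →+ (Fin l → R))
    (hLeibniz : ∀ (a : R) (v : Fin l → R), nabla (a • v) = D a • v + a • nabla v)
    (g : AlternatingMap R (Fin l → R) R (Fin s)) :
    AlternatingMap R (Fin l → R) R (Fin s) where
  toFun v := D (g v) - ∑ j, g (update v j (nabla (v j)))
  map_update_add' v i x y := by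
    rename_i instDE
    obtain rfl : instDE = instDecidableEqFin s := Subsingleton.elim _ _
    have hsum : ∀ j, g (update (update v i (x + y)) j (nabla (update v i (x + y) j)))
        = g (update (update v i x) j (nabla (update v i x j)))
          + g (update (update v i y) j (nabla (update v i y j))) := by
      intro j
      rcases eq_or_ne j i with rfl | hj
      · simp only [Function.update_idem, update_self, map_add, g.map_update_add]
      · rw [update_of_ne hj, update_of_ne hj, update_of_ne hj,
          Function.update_comm hj.symm, Function.update_comm hj.symm,
          Function.update_comm hj.symm, ← g.map_update_add]
    have h1 : (∑ j, g (update (update v i (x + y)) j (nabla (update v i (x + y) j))))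
        = ∑ j, (g (update (update v i x) j (nabla (update v i x j)))
          + g (update (update v i y) j (nabla (update v i y j)))) :=
      Finset.sum_congr rfl fun j _ => hsum j
    beta_reduce
    rw [h1, Finset.sum_add_distrib, g.map_update_add, map_add]
    ring
  map_update_smul' v i a x := by
    rename_i instDE
    obtain rfl : instDE = instDecidableEqFin s := Subsingleton.elim _ _
    have hsum : ∀ j, g (update (update v i (a • x)) j (nabla (update v i (a • x) j)))
        = a * g (update (update v i x) j (nabla (update v i x j)))
          + (if j = i then D a * g (update v i x) else 0) := by
      intro j
      rcases eq_or_ne j i with rfl | hj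
      · simp only [if_pos rfl, Function.update_idem, update_self, hLeibniz,
          g.map_update_add, g.map_update_smul, smul_eq_mul, eq_self_iff_true, if_true]
        ring
      · rw [if_neg hj, update_of_ne hj, update_of_ne hj,
          Function.update_comm hj.symm, Function.update_comm hj.symm,
          g.map_update_smul, smul_eq_mul, add_zero]
    have h1 : (∑ j, g (update (update v i (a • x)) j (nabla (update v i (a • x) j))))
        = ∑ j, (a * g (update (update v i x) j (nabla (update v i x j)))
          + if j = i then D a * g (update v i x) else 0) :=
      Finset.sum_congr rfl fun j _ => hsum j
    beta_reduce
    rw [h1, Finset.sum_add_distrib, g.map_update_smul, smul_eq_mul, Derivation.leibniz]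
    simp only [Finset.sum_ite_eq', Finset.mem_univ, if_true, ← Finset.mul_sum, smul_eq_mul]
    ring
  map_eq_zero_of_eq' v i j hvij hij := by
    have hz : ∀ k, k ≠ i → k ≠ j → g (update v k (nabla (v k))) = 0 := by
      intro k hki hkj
      refine g.map_eq_zero_of_eq _ ?_ hij
      rw [update_of_ne hki.symm, update_of_ne hkj.symm, hvij]
    have hcomp : update v j (nabla (v i)) = (update v i (nabla (v i))) ∘ Equiv.swap i j := by
      funext k
      rcases eq_or_ne k i with rfl | hki
      · simp [Equiv.swap_apply_left, Function.update_apply, hij, hij.symm, Ne.symm hij, hvij]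
      · rcases eq_or_ne k j with rfl | hkj
        · simp [Equiv.swap_apply_right, Function.update_apply]
        · simp [Equiv.swap_apply_of_ne_of_ne hki hkj, Function.update_apply, hki, hkj]
    have hpair : g (update v j (nabla (v j))) = - g (update v i (nabla (v i))) := by
      rw [← hvij, hcomp, g.map_swap (update v i (nabla (v i))) hij]
    have hsum : ∑ k, g (update v k (nabla (v k)))
        = ∑ k ∈ ({i, j} : Finset (Fin s)), g (update v k (nabla (v k))) := by
      refine (Finset.sum_subset (Finset.subset_univ _) fun k _ hk => ?_).symm
      simp only [Finset.mem_insert, Finset.mem_singleton, not_or] at hk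
      exact hz k hk.1 hk.2
    show D (g v) - ∑ k, g (update v k (nabla (v k))) = 0
    rw [g.map_eq_zero_of_eq v hvij hij, map_zero, hsum, Finset.sum_pair hij, hpair]
    ring

/-- Let `R` be a commutative ring, `D : R → R` a derivation, and `l ≥ 1`. Let `∇ : R^l → R^l`
be an additive map satisfying the Leibniz rule relative to `D`, and `N ⊆ R^l` a `∇`-stable
submodule. For `0 ≤ s ≤ l`, let `I_s` be the ideal generated by all values `g (n_1, …, n_s)`
where `g` ranges over alternating `R`-multilinear maps `(R^l)^s → R` and `n_i ∈ N`.
Then `D (I_s) ⊆ I_s`. -/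
theorem stmt_6 {R : Type*} [CommRing R] (D : Derivation ℤ R R) (l : ℕ) (hl : 1 ≤ l)
    (nabla : (Fin l → R) →+ (Fin l → R))
    (hLeibniz : ∀ (a : R) (v : Fin l → R), nabla (a • v) = D a • v + a • nabla v)
    (N : Submodule R (Fin l → R)) (hN : ∀ v ∈ N, nabla v ∈ N)
    (s : ℕ) (hs : s ≤ l)
    (I : Ideal R)
    (hI : I = Ideal.span {y : R | ∃ (g : AlternatingMap R (Fin l → R) R (Fin s))
      (v : Fin s → (Fin l → R)), (∀ i, v i ∈ N) ∧ y = g v}) :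
    ∀ y ∈ I, D y ∈ I := by
  subst hI
  intro y hy
  induction hy using Submodule.span_induction with
  | mem x hx =>
      obtain ⟨g, v, hv, rfl⟩ := hx
      have key : D (g v) = (altD D nabla hLeibniz g) v
          + ∑ j, g (Function.update v j (nabla (v j))) := by
        show D (g v) = (D (g v) - ∑ j, g (Function.update v j (nabla (v j)))) + _
        ring
      rw [key]
      refine Ideal.add_mem _ (Ideal.subset_span ⟨altD D nabla hLeibniz g, v, hv, rfl⟩)
        (Ideal.sum_mem _ fun j _ => Ideal.subset_span
          ⟨g, Function.update v j (nabla (v j)), fun k => ?_, rfl⟩)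
      rcases eq_or_ne k j with rfl | hk
      · simpa using hN _ (hv k)
      · simpa [Function.update_of_ne hk] using hv k
  | zero => simp
  | add x y hx hy ihx ihy => simpa using Ideal.add_mem _ ihx ihy
  | smul a x hx ihx =>
      rw [smul_eq_mul, Derivation.leibniz]
      exact Ideal.add_mem _ (by simpa using Ideal.mul_mem_left _ a ihx)
        (by simpa using Ideal.mul_mem_right (D a) _ hx)
end

section
/- Let p be a prime and A a reduced commutative ring with p·1_A = 0. Then k := ⋂_{n≥1} A^{p^n}, where A^{p^n} := {a^{p^n} : a ∈ A}, is a subring of A on which the Frobenius map a ↦ a^p is bijective; that is, k is a perfect 𝔽_p-algebra. -/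
/-- Let `p` be a prime and `A` a reduced commutative ring with `p·1 = 0`. Then
`k := ⋂_{n ≥ 1} A^{p^n}` is a subring of `A` on which the Frobenius `a ↦ a^p` is bijective,
i.e. `k` is a perfect `𝔽_p`-algebra. -/
theorem stmt_7 (p : ℕ) (hp : p.Prime) (A : Type*) [CommRing A] [IsReduced A]
    (hpA : (p : A) = 0)
    (k : Set A) (hk : k = ⋂ (n : ℕ) (_ : 1 ≤ n), {a : A | ∃ c : A, c ^ (p ^ n) = a}) :
    (∃ S : Subring A, (S : Set A) = k) ∧
    (∀ x ∈ k, x ^ p ∈ k) ∧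
    (∀ x ∈ k, ∀ y ∈ k, x ^ p = y ^ p → x = y) ∧
    (∀ y ∈ k, ∃ x ∈ k, x ^ p = y) := by
  rcases subsingleton_or_nontrivial A with hA | hA
  · have hkuniv : k = Set.univ := by
      apply Set.eq_univ_of_forall
      intro a
      rw [hk]
      simp only [Set.mem_iInter, Set.mem_setOf_eq]
      intro n _
      exact ⟨a, Subsingleton.elim _ _⟩
    refine ⟨⟨⊤, by simp [hkuniv]⟩, ?_, ?_, ?_⟩
    · intro x _; rw [hkuniv]; trivial
    · intro x _ y _ _; exact Subsingleton.elim _ _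
    · intro y hy; exact ⟨y, hy, Subsingleton.elim _ _⟩
  · haveI : CharP A p := (CharP.charP_iff_prime_eq_zero hp).mpr hpA
    haveI : ExpChar A p := .prime hp
    -- membership characterization
    have hmem : ∀ x : A, x ∈ k ↔ ∀ n : ℕ, 1 ≤ n → ∃ c : A, c ^ p ^ n = x := by
      intro x
      rw [hk]
      simp [Set.mem_iInter]
    have hfrobinj : Function.Injective (frobenius A p) := frobenius_inj A p
    refine ⟨?_, ?_, ?_, ?_⟩
    · refine ⟨⨅ n ∈ {n : ℕ | 1 ≤ n}, (iterateFrobenius A p n).range, ?_⟩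
      ext x
      simp only [Subring.coe_iInf, Set.mem_iInter, SetLike.mem_coe, RingHom.mem_range,
        Set.mem_setOf_eq, hmem, iterateFrobenius_def]
    · intro x hx
      rw [hmem] at hx ⊢
      intro n hn
      obtain ⟨c, hc⟩ := hx n hn
      exact ⟨c ^ p, by rw [← hc]; ring⟩
    · intro x _ y _ h
      exact hfrobinj h
    · intro y hy
      rw [hmem] at hy
      obtain ⟨c, hc⟩ := hy 1 le_rfl
      refine ⟨c, ?_, by simpa using hc⟩
      rw [hmem]
      intro n hn
      obtain ⟨d, hd⟩ := hy (n + 1) (by omega)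
      refine ⟨d, hfrobinj ?_⟩
      show (d ^ p ^ n) ^ p = c ^ p
      rw [← pow_mul, ← pow_succ, hd, ← hc, pow_one]
end

section
/- Let p be a prime and A a Noetherian integrally closed domain with p·1_A = 0, with fraction field E. Then ⋂_{n≥1} E^{p^n} = ⋂_{n≥1} A^{p^n}, where E^{p^n} := {f^{p^n} : f ∈ E} and A^{p^n} := {a^{p^n} : a ∈ A}; moreover this common set is a subfield of E on which the Frobenius map x ↦ x^p is bijective (a perfect field). -/
section Aux

variable {p : ℕ} {A : Type*} [CommRing A] [IsDomain A] [IsIntegrallyClosed A]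

/-- If a power of `z` lies in the image of `A` in its fraction field, so does `z`. -/
lemma aux_root_range {z : FractionRing A} {k : ℕ} (hk : 0 < k)
    (hz : z ^ k ∈ (algebraMap A (FractionRing A)).range) :
    z ∈ (algebraMap A (FractionRing A)).range := by
  obtain ⟨a, ha⟩ := hz
  obtain ⟨b, hb⟩ := IsIntegrallyClosed.exists_algebraMap_eq_of_isIntegral_pow
    (R := A) (K := FractionRing A) hk (ha ▸ isIntegral_algebraMap)
  exact ⟨b, hb⟩

/-- Key computation: if `b * g` is "integral" (in the image of `A`) and `w` is a `p^s`-th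
root of `g`, then `b * w^k` is in the image of `A` for all `k ≤ p^s`. -/
lemma aux_root_mul_mem (hp : p.Prime) {b : A} {g w : FractionRing A} {s k : ℕ}
    (hk : k ≤ p ^ s) (hw : w ^ p ^ s = g)
    (hb : algebraMap A (FractionRing A) b * g ∈ (algebraMap A (FractionRing A)).range) :
    algebraMap A (FractionRing A) b * w ^ k ∈ (algebraMap A (FractionRing A)).range := by
  have hps : 0 < p ^ s := pow_pos hp.pos s
  apply aux_root_range hps
  have key : (algebraMap A (FractionRing A) b * w ^ k) ^ p ^ s =
      algebraMap A (FractionRing A) b ^ (p ^ s - k) *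
        (algebraMap A (FractionRing A) b * g) ^ k := by
    rw [mul_pow, mul_pow, ← hw, ← pow_mul, ← pow_mul, ← mul_assoc, ← pow_add,
      Nat.sub_add_cancel hk, mul_comm k (p ^ s)]
  rw [key]
  exact mul_mem (pow_mem (RingHom.mem_range_self _ b) _) (pow_mem hb k)

end Aux

/-- Let `p` be a prime and `A` a Noetherian integrally closed domain with `p·1 = 0`, with
fraction field `E`. Then `⋂_{n ≥ 1} E^{p^n}` equals (the image in `E` of) `⋂_{n ≥ 1} A^{p^n}`,
and this common set is a subfield of `E` on which Frobenius `x ↦ x^p` is bijective. -/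
theorem stmt_8 (p : ℕ) (hp : p.Prime) (A : Type*) [CommRing A] [IsDomain A]
    [IsNoetherianRing A] [IsIntegrallyClosed A] (hpA : (p : A) = 0)
    (kE : Set (FractionRing A))
    (hkE : kE = ⋂ (n : ℕ) (_ : 1 ≤ n), {x : FractionRing A | ∃ y, y ^ (p ^ n) = x})
    (kA : Set A) (hkA : kA = ⋂ (n : ℕ) (_ : 1 ≤ n), {a : A | ∃ c : A, c ^ (p ^ n) = a}) :
    kE = (algebraMap A (FractionRing A)) '' kA ∧
    (∃ F : Subfield (FractionRing A), (F : Set (FractionRing A)) = kE) ∧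
    (∀ x ∈ kE, x ^ p ∈ kE) ∧
    (∀ x ∈ kE, ∀ y ∈ kE, x ^ p = y ^ p → x = y) ∧
    (∀ y ∈ kE, ∃ x ∈ kE, x ^ p = y) := by
  let E := FractionRing A
  show kE = (algebraMap A E) '' kA ∧ (∃ F : Subfield E, (F : Set E) = kE) ∧
    (∀ x ∈ kE, x ^ p ∈ kE) ∧ (∀ x ∈ kE, ∀ y ∈ kE, x ^ p = y ^ p → x = y) ∧
    (∀ y ∈ kE, ∃ x ∈ kE, x ^ p = y)
  haveI : CharP A p := (CharP.charP_iff_prime_eq_zero hp).mpr hpA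
  haveI : CharP E p := charP_of_injective_algebraMap
    (IsFractionRing.injective A E) p
  haveI : ExpChar E p := ExpChar.prime hp
  haveI : ExpChar A p := ExpChar.prime hp
  -- injectivity of x ↦ x ^ p ^ n on E
  have pinj : ∀ (n : ℕ) (x z : E), x ^ p ^ n = z ^ p ^ n → x = z := by
    intro n x z h
    exact iterateFrobenius_inj E p n (by simpa [iterateFrobenius_def] using h)
  -- membership criterion for kE
  have memkE : ∀ x : E, x ∈ kE ↔ ∀ n : ℕ, 1 ≤ n → ∃ y : E, y ^ p ^ n = x := by
    intro x; rw [hkE]; simp [Set.mem_iInter]; exact Iff.rfl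
  -- the main claim: every element of kE is in the image of A
  have main : ∀ f ∈ kE, ∃ a : A, algebraMap A E a = f := by
    intro f hf
    rw [memkE] at hf
    -- the compatible system of p-power roots of f
    let y : ℕ → E := fun n => if h : 1 ≤ n then (hf n h).choose else f
    have hy : ∀ n, y n ^ p ^ n = f := by
      intro n
      by_cases h : 1 ≤ n
      · simpa [y, h] using (hf n h).choose_spec
      · have : n = 0 := by omega
        simp [y, this]
    have hy' : ∀ n, y (n + 1) ^ p = y n := by
      intro n
      apply pinj n
      rw [← pow_mul, ← pow_succ', hy, hy]
    -- the chain of "denominator" ideals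
    let I : ℕ → Ideal A := fun n =>
      { carrier := {b : A | algebraMap A E b * y n ∈ (algebraMap A E).range}
        add_mem' := fun ha hb => by
          simp only [Set.mem_setOf_eq] at ha hb ⊢
          rw [map_add, add_mul]
          exact add_mem ha hb
        zero_mem' := by simp
        smul_mem' := fun c x hx => by
          simp only [Set.mem_setOf_eq] at hx ⊢
          rw [smul_eq_mul, map_mul, mul_assoc]
          exact mul_mem (RingHom.mem_range_self _ c) hx }
    have memI : ∀ n (b : A), b ∈ I n ↔ algebraMap A E b * y n ∈ (algebraMap A E).range :=
      fun n b => Iff.rfl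
    have Imono : Monotone I := by
      apply monotone_nat_of_le_succ
      intro n b hb
      rw [memI] at hb ⊢
      have := aux_root_mul_mem (p := p) (A := A) hp (b := b) (g := y n) (w := y (n + 1))
        (s := 1) (k := 1) (by simpa using hp.one_lt.le) (by simpa using hy' n) hb
      simpa using this
    obtain ⟨N, hN0⟩ := monotone_stabilizes_iff_noetherian.mpr
      (inferInstance : IsNoetherian A A) ⟨I, Imono⟩
    have hN : ∀ m, N ≤ m → I N = I m := fun m hm => hN0 m hm
    -- the submodule of E corresponding to I N
    set B : Submodule A E := Submodule.map (Algebra.linearMap A E) (I N) with hB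
    -- I N is nonzero
    obtain ⟨d, hd⟩ := IsLocalization.exists_integer_multiple (nonZeroDivisors A) (y N)
    have hdI : (d : A) ∈ I N := by
      rw [memI]
      obtain ⟨c, hc⟩ := hd
      exact ⟨c, by rw [hc, Algebra.smul_def]⟩
    have hd0 : (d : A) ≠ 0 := nonZeroDivisors.coe_ne_zero d
    have hBbot : B ≠ ⊥ := by
      intro h
      have : algebraMap A E d ∈ B := ⟨d, hdI, rfl⟩
      rw [h, Submodule.mem_bot] at this
      exact hd0 (IsFractionRing.injective A E (by simpa using this))
    have hBfg : B.FG := (IsNoetherian.noetherian (I N)).map _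
    -- multiplication by y (N+1) preserves B
    have hstab : ∀ m ∈ B, y (N + 1) • m ∈ B := by
      rintro m ⟨b, hb, rfl⟩
      have hb0 : b ∈ I N := hb
      have hb' : b ∈ I (N + 1) := (hN (N + 1) (by omega)) ▸ hb0
      rw [memI] at hb'
      obtain ⟨c, hc⟩ := hb'
      have hcI : c ∈ I N := by
        rw [hN (N + 2) (by omega), memI]
        have hw : y (N + 2) ^ p ^ 2 = y N := by
          rw [pow_two, pow_mul, hy', hy']
        have hk : p + 1 ≤ p ^ 2 := by nlinarith [hp.two_le]
        have := aux_root_mul_mem (p := p) (A := A) hp (b := b) (g := y N)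
          (w := y (N + 2)) (s := 2) (k := p + 1) hk hw ((memI N b).mp hb0)
        have heq : algebraMap A E c * y (N + 2) = algebraMap A E b * y (N + 2) ^ (p + 1) := by
          rw [hc, ← hy' (N + 1), mul_assoc, ← pow_succ]
        rw [heq]
        exact this
      refine ⟨c, hcI, ?_⟩
      simp only [Algebra.linearMap_apply, smul_eq_mul]
      rw [hc, mul_comm]
    have hint : IsIntegral A (y (N + 1)) :=
      isIntegral_of_smul_mem_submodule B hBbot hBfg _ hstab
    obtain ⟨a, ha⟩ := IsIntegrallyClosed.isIntegral_iff.mp hint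
    exact ⟨a ^ p ^ (N + 1), by rw [map_pow, ha, hy]⟩
  -- forward image statement
  have himg : kE = (algebraMap A E) '' kA := by
    apply Set.Subset.antisymm
    · intro f hf
      obtain ⟨a, ha⟩ := main f hf
      refine ⟨a, ?_, ha⟩
      rw [hkA]
      simp only [Set.mem_iInter, Set.mem_setOf_eq]
      intro n hn
      obtain ⟨z, hz⟩ := (memkE f).mp hf n hn
      have hzint : z ∈ (algebraMap A E).range :=
        aux_root_range (pow_pos hp.pos n) (by rw [hz, ← ha]; exact RingHom.mem_range_self _ a)
      obtain ⟨c, hc⟩ := hzint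
      refine ⟨c, IsFractionRing.injective A E ?_⟩
      rw [map_pow, hc, hz, ha]
    · rintro _ ⟨a, ha, rfl⟩
      rw [hkA] at ha
      simp only [Set.mem_iInter, Set.mem_setOf_eq] at ha
      rw [memkE]
      intro n hn
      obtain ⟨c, hc⟩ := ha n hn
      exact ⟨algebraMap A E c, by rw [← map_pow, hc]⟩
  refine ⟨himg, ?_, ?_, ?_, ?_⟩
  · -- subfield
    refine ⟨⨅ (n : ℕ) (_ : 1 ≤ n), (iterateFrobenius E p n).fieldRange, ?_⟩
    rw [hkE]
    ext x
    simp [Subfield.coe_iInf, Set.mem_iInter, RingHom.mem_fieldRange, iterateFrobenius_def]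
    exact Iff.rfl
  · -- closed under Frobenius
    intro x hx
    rw [memkE] at hx ⊢
    intro n hn
    obtain ⟨z, hz⟩ := hx n hn
    exact ⟨z ^ p, by rw [← hz, ← pow_mul, ← pow_mul, mul_comm]⟩
  · -- injectivity
    intro x _ z _ h
    have := pinj 1 x z (by simpa using h)
    exact this
  · -- surjectivity
    intro f hf
    rw [memkE] at hf
    obtain ⟨x, hx⟩ := hf 1 (le_refl 1)
    rw [pow_one] at hx
    refine ⟨x, ?_, hx⟩
    rw [memkE]
    intro n hn
    obtain ⟨z, hz⟩ := hf (n + 1) (by omega)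
    refine ⟨z, ?_⟩
    apply pinj 1
    rw [← pow_mul, pow_one, ← pow_succ, hz, hx]
end

section
/- Let A be a commutative ring, p a prime number, and M an A-module on which p is a non-zero-divisor (p·x = 0 implies x = 0 for x ∈ M). Let r ≥ 0 be an integer and φ : M → M an A-linear endomorphism with φ∘φ = p^r·φ. Set M' := p^r·M + φ(M) and N := {p^r·x − φ(x) : x ∈ M}. Then: (1) p^r·M ⊆ M' ⊆ M; (2) M' = φ(M) ⊕ N (internal direct sum of A-submodules); (3) φ(N) = 0 and φ(y) = p^r·y for all y ∈ φ(M); (4) if M is a finitely generated A-module, then so are M', φ(M) and N. -/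
lemma stmt_11_aux {A : Type*} [CommRing A] (p : ℕ)
    {M : Type*} [AddCommGroup M] [Module A M]
    (hreg : ∀ x : M, (p : A) • x = 0 → x = 0)
    (r : ℕ) (y : M) (h : (p : A) ^ r • y = 0) : y = 0 := by
  induction r with
  | zero => simpa using h
  | succ n ih =>
    apply ih
    apply hreg
    rw [smul_smul, mul_comm, ← pow_succ]
    exact h

/-- Let `A` be a commutative ring, `p` a prime, and `M` an `A`-module on which `p` is a
non-zero-divisor. Let `r ≥ 0` and `φ : M → M` be `A`-linear with `φ ∘ φ = p^r·φ`. Set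
`M' := p^r·M + φ(M)` and `N := {p^r·x − φ(x) : x ∈ M}`. Then `p^r M ⊆ M' ⊆ M`,
`M' = φ(M) ⊕ N`, `φ(N) = 0`, `φ = p^r·id` on `φ(M)`, and if `M` is finitely generated then
so are `M'`, `φ(M)` and `N`. -/
theorem stmt_11 {A : Type*} [CommRing A] (p : ℕ) (hp : p.Prime)
    {M : Type*} [AddCommGroup M] [Module A M]
    (hreg : ∀ x : M, (p : A) • x = 0 → x = 0)
    (r : ℕ) (φ : M →ₗ[A] M) (hφ : ∀ x : M, φ (φ x) = (p : A) ^ r • φ x)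
    (P M' N : Submodule A M)
    (hP : P = LinearMap.range ((p : A) ^ r • (LinearMap.id : M →ₗ[A] M)))
    (hM' : M' = P ⊔ LinearMap.range φ)
    (hN : N = LinearMap.range ((p : A) ^ r • (LinearMap.id : M →ₗ[A] M) - φ)) :
    (P ≤ M' ∧ M' ≤ ⊤) ∧
    (M' = LinearMap.range φ ⊔ N ∧ LinearMap.range φ ⊓ N = ⊥) ∧
    (∀ x : M, φ ((p : A) ^ r • x - φ x) = 0) ∧
    (∀ y ∈ LinearMap.range φ, φ y = (p : A) ^ r • y) ∧
    (Module.Finite A M → M'.FG ∧ (LinearMap.range φ).FG ∧ N.FG) := by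
  have hker : ∀ x : M, φ ((p : A) ^ r • x - φ x) = 0 := by
    intro x
    rw [map_sub, map_smul, hφ, sub_self]
  refine ⟨⟨hM' ▸ le_sup_left, le_top⟩, ⟨?_, ?_⟩, hker, ?_, ?_⟩
  · -- M' = range φ ⊔ N
    apply le_antisymm
    · rw [hM']
      apply sup_le
      · rw [hP]
        rintro y ⟨x, rfl⟩
        have : ((p : A) ^ r • (LinearMap.id : M →ₗ[A] M)) x
            = φ x + ((p : A) ^ r • (LinearMap.id : M →ₗ[A] M) - φ) x := by
          simp
        rw [this]
        exact Submodule.add_mem_sup ⟨x, rfl⟩ (hN ▸ ⟨x, rfl⟩)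
      · exact le_sup_left
    · rw [hM']
      apply sup_le
      · exact le_sup_right
      · rw [hN, hP]
        rintro y ⟨x, rfl⟩
        have : ((p : A) ^ r • (LinearMap.id : M →ₗ[A] M) - φ) x
            = ((p : A) ^ r • (LinearMap.id : M →ₗ[A] M)) x + (-(φ x)) := by
          simp [sub_eq_add_neg]
        rw [this]
        exact Submodule.add_mem_sup ⟨x, rfl⟩ (Submodule.neg_mem _ ⟨x, rfl⟩)
  · -- range φ ⊓ N = ⊥
    rw [eq_bot_iff]
    rintro y ⟨⟨x, rfl⟩, hy2⟩
    rw [hN] at hy2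
    obtain ⟨z, hz⟩ := hy2
    simp only [LinearMap.sub_apply, LinearMap.smul_apply, LinearMap.id_apply] at hz
    have h1 : φ (φ x) = (p : A) ^ r • φ x := hφ x
    have h2 : φ (φ x) = 0 := by
      rw [← hz]; exact hker z
    have : (p : A) ^ r • φ x = 0 := by rw [← h1, h2]
    simp [stmt_11_aux p hreg r _ this]
  · rintro y ⟨x, rfl⟩
    exact hφ x
  · intro hfin
    have fg : ∀ f : M →ₗ[A] M, (LinearMap.range f).FG := by
      intro f
      have : Module.Finite A (LinearMap.range f) := Module.Finite.range f
      exact (Module.Finite.iff_fg).mp this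
    exact ⟨hM' ▸ Submodule.FG.sup (hP ▸ fg _) (fg φ), fg φ, hN ▸ fg _⟩
end

section
/- Let p be a prime and n ≥ 0 an integer. Let φ : A → B be a homomorphism of commutative rings such that B/p^{n+1}B is a faithfully flat A/p^{n+1}A-module. Assume A is p-adically complete and separated, and let M be an A-module that is p-adically complete and separated (the canonical map M → lim_r M/p^r M is bijective) and on which p is a non-zero-divisor. Suppose there exists a finitely generated B-submodule N' of B ⊗_A M with p^n·(B ⊗_A M) ⊆ N'. Then there exists a finitely generated A-submodule N of M with p^n·M ⊆ N. -/
open scoped TensorProduct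

lemma spanPow_le_comap {A B : Type*} [CommRing A] [CommRing B] (φ : A →+* B) (p r : ℕ) :
    Ideal.span {(p : A) ^ r} ≤ (Ideal.span {(p : B) ^ r}).comap φ := by
  rw [Ideal.span_le, Set.singleton_subset_iff]
  have h : φ ((p : A) ^ r) = (p : B) ^ r := by
    rw [map_pow, map_natCast]
  show φ ((p : A) ^ r) ∈ Ideal.span {(p : B) ^ r}
  rw [h]
  exact Ideal.subset_span rfl

/-- The ring homomorphism `A/p^r A → B/p^r B` induced by `φ : A → B`. -/
def inducedQuotMap {A B : Type*} [CommRing A] [CommRing B] (φ : A →+* B) (p r : ℕ) :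
    A ⧸ Ideal.span {(p : A) ^ r} →+* B ⧸ Ideal.span {(p : B) ^ r} :=
  Ideal.quotientMap _ φ (spanPow_le_comap φ p r)

/-- Membership in `span {a} • ⊤`. -/
lemma mem_spanSingleton_smul_top {R M : Type*} [CommRing R] [AddCommGroup M] [Module R M]
    (a : R) (x : M) :
    x ∈ (Ideal.span {a} • ⊤ : Submodule R M) ↔ ∃ y, a • y = x := by
  constructor
  · intro hx
    refine Submodule.smul_induction_on hx ?_ ?_
    · rintro r hr m -
      obtain ⟨c, rfl⟩ := Ideal.mem_span_singleton'.1 hr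
      exact ⟨c • m, by rw [smul_smul, mul_comm]⟩
    · rintro x y ⟨u, rfl⟩ ⟨v, rfl⟩
      exact ⟨u + v, by rw [smul_add]⟩
  · rintro ⟨y, rfl⟩
    exact Submodule.smul_mem_smul (Ideal.subset_span rfl) trivial

set_option maxHeartbeats 1000000 in
/-- The key descent step. -/
lemma descent_key (p : ℕ) (n : ℕ) {A B : Type*} [CommRing A] [CommRing B] [Algebra A B]
    (hff : @Module.FaithfullyFlat (A ⧸ Ideal.span {(p : A) ^ (n + 1)})
      (B ⧸ Ideal.span {(p : B) ^ (n + 1)}) _ _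
      (inducedQuotMap (algebraMap A B) p (n + 1)).toModule)
    {M : Type*} [AddCommGroup M] [Module A M] (T : Finset M)
    (h : ∀ y : B ⊗[A] M,
      (p : B) ^ n • y ∈ Submodule.span B ((fun m => (1 : B) ⊗ₜ[A] m) '' ↑T)) :
    ∀ x : M, (p : A) ^ n • x ∈
      Submodule.span A (T : Set M) ⊔ (Ideal.span {(p : A) ^ (n + 1)} • ⊤ : Submodule A M) := by
  classical
  set IA : Ideal A := Ideal.span {(p : A) ^ (n + 1)} with hIAdef
  set IB : Ideal B := Ideal.span {(p : B) ^ (n + 1)} with hIBdef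
  set K : Submodule A M := Submodule.span A (T : Set M) ⊔ (IA • ⊤) with hKdef
  have htor : Module.IsTorsionBySet A (M ⧸ K) ↑IA := by
    intro q a
    obtain ⟨m, rfl⟩ := K.mkQ_surjective q
    show (a : A) • K.mkQ m = 0
    rw [← map_smul, Submodule.mkQ_apply, Submodule.Quotient.mk_eq_zero]
    exact Submodule.mem_sup_right (Submodule.smul_mem_smul a.2 trivial)
  letI instQbar : Module (A ⧸ IA) (M ⧸ K) := htor.module
  letI instAlg : Algebra (A ⧸ IA) (B ⧸ IB) := (inducedQuotMap (algebraMap A B) p (n + 1)).toAlgebra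
  have hmodeq : (inducedQuotMap (algebraMap A B) p (n + 1)).toModule
      = (Algebra.toModule : Module (A ⧸ IA) (B ⧸ IB)) :=
    Module.ext' _ _ fun r m => rfl
  haveI hff' : @Module.FaithfullyFlat (A ⧸ IA) (B ⧸ IB) _ _ Algebra.toModule := by
    rw [← hmodeq]; exact hff
  have mkA_smul : ∀ (a : A) (q : M ⧸ K), Ideal.Quotient.mk IA a • q = a • q := fun a q =>
    htor.mk_smul a q
  have halg : ∀ a : A, algebraMap (A ⧸ IA) (B ⧸ IB) (Ideal.Quotient.mk IA a)
      = Ideal.Quotient.mk IB (algebraMap A B a) := by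
    intro a
    rw [RingHom.algebraMap_toAlgebra]
    exact Ideal.quotientMap_mk
  set f₀ : B →+ M →+ ((B ⧸ IB) ⊗[A ⧸ IA] (M ⧸ K)) :=
    { toFun := fun b =>
        { toFun := fun m => Ideal.Quotient.mk IB b ⊗ₜ[A ⧸ IA] (K.mkQ m)
          map_zero' := by simp only [map_zero, TensorProduct.tmul_zero]
          map_add' := fun m₁ m₂ => by simp only [map_add, TensorProduct.tmul_add] }
      map_zero' := by
        ext m
        simp only [map_zero, TensorProduct.zero_tmul, AddMonoidHom.coe_mk, ZeroHom.coe_mk,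
          AddMonoidHom.zero_apply]
      map_add' := fun b₁ b₂ => by
        ext m
        simp only [map_add, TensorProduct.add_tmul, AddMonoidHom.coe_mk, ZeroHom.coe_mk,
          AddMonoidHom.add_apply] } with hf₀def
  have hbal : ∀ (a : A) (b : B) (m : M), f₀ (a • b) m = f₀ b (a • m) := by
    intro a b m
    show Ideal.Quotient.mk IB (a • b) ⊗ₜ[A ⧸ IA] K.mkQ m
        = Ideal.Quotient.mk IB b ⊗ₜ[A ⧸ IA] K.mkQ (a • m)
    have e1 : K.mkQ (a • m) = Ideal.Quotient.mk IA a • K.mkQ m := by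
      rw [LinearMap.map_smul]
      exact (mkA_smul a _).symm
    have e2 : Ideal.Quotient.mk IB (a • b)
        = Ideal.Quotient.mk IA a • Ideal.Quotient.mk IB b := by
      rw [Algebra.smul_def a b, map_mul,
        Algebra.smul_def (Ideal.Quotient.mk IA a) (Ideal.Quotient.mk IB b), halg a]
    rw [e1, e2, ← TensorProduct.smul_tmul', TensorProduct.tmul_smul]
  set θ : B ⊗[A] M →+ ((B ⧸ IB) ⊗[A ⧸ IA] (M ⧸ K)) := TensorProduct.liftAddHom f₀ hbal
    with hθdef
  have θ_tmul : ∀ (b : B) (m : M),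
      θ (b ⊗ₜ[A] m) = Ideal.Quotient.mk IB b ⊗ₜ[A ⧸ IA] (K.mkQ m) := fun b m => rfl
  have hsemi : ∀ (c : B) (x : B ⊗[A] M), θ (c • x) = Ideal.Quotient.mk IB c • θ x := by
    intro c x
    induction x using TensorProduct.induction_on with
    | zero => rw [smul_zero, map_zero, smul_zero]
    | tmul b m =>
      rw [TensorProduct.smul_tmul', smul_eq_mul, θ_tmul, θ_tmul, map_mul,
        ← smul_eq_mul, TensorProduct.smul_tmul']
    | add x y hx hy => rw [smul_add, map_add, map_add, hx, hy, smul_add]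
  have hkill : ∀ x ∈ Submodule.span B ((fun m => (1 : B) ⊗ₜ[A] m) '' ↑T), θ x = 0 := by
    intro x hx
    induction hx using Submodule.span_induction with
    | mem x hmem =>
      obtain ⟨t, ht, rfl⟩ := hmem
      rw [θ_tmul]
      have : K.mkQ t = 0 := by
        rw [Submodule.mkQ_apply, Submodule.Quotient.mk_eq_zero]
        exact Submodule.mem_sup_left (Submodule.subset_span ht)
      rw [this, TensorProduct.tmul_zero]
    | zero => exact map_zero θ
    | add x y hx hy ihx ihy => rw [map_add, ihx, ihy, add_zero]
    | smul c x hx ih => rw [hsemi, ih, smul_zero]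
  have hvanish : ∀ (b : B) (m : M),
      Ideal.Quotient.mk IB b ⊗ₜ[A ⧸ IA] (K.mkQ ((p : A) ^ n • m))
        = (0 : (B ⧸ IB) ⊗[A ⧸ IA] (M ⧸ K)) := by
    intro b m
    have h2 : b ⊗ₜ[A] ((p : A) ^ n • m) = (p : B) ^ n • (b ⊗ₜ[A] m) := by
      rw [TensorProduct.tmul_smul]
      rw [← algebraMap_smul B ((p : A) ^ n) (b ⊗ₜ[A] m)]
      congr 1
      rw [map_pow, map_natCast]
    rw [← θ_tmul, h2]
    exact hkill _ (h _)
  have hμ : (LinearMap.lsmul (A ⧸ IA) (M ⧸ K) (Ideal.Quotient.mk IA ((p : A) ^ n))) = 0 := by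
    rw [Module.FaithfullyFlat.zero_iff_lTensor_zero (A ⧸ IA) (B ⧸ IB)]
    apply TensorProduct.ext'
    intro bb q
    obtain ⟨b, rfl⟩ := Ideal.Quotient.mk_surjective bb
    obtain ⟨m, rfl⟩ := K.mkQ_surjective q
    rw [LinearMap.lTensor_tmul, LinearMap.zero_apply, LinearMap.lsmul_apply,
      mkA_smul, ← map_smul]
    exact hvanish b m
  intro x
  have hx0 : K.mkQ ((p : A) ^ n • x) = 0 := by
    rw [map_smul, ← mkA_smul]
    exact LinearMap.congr_fun hμ (K.mkQ x)
  rw [Submodule.mkQ_apply, Submodule.Quotient.mk_eq_zero] at hx0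
  exact hx0

/-- The completeness step: if `p^n • x ∈ span T + p^{n+1} M` for all `x`, with `A` and `M`
`p`-adically complete, then `p^n • x ∈ span T` for all `x`. -/
lemma complete_key {A : Type*} [CommRing A] {M : Type*} [AddCommGroup M] [Module A M]
    (p : A) (n : ℕ)
    (hcA : IsAdicComplete (Ideal.span {p}) A)
    (hcM : IsAdicComplete (Ideal.span {p}) M)
    (T : Finset M)
    (h : ∀ x : M, p ^ n • x ∈
      Submodule.span A (T : Set M) ⊔ (Ideal.span {p ^ (n + 1)} • ⊤ : Submodule A M)) :
    ∀ x : M, p ^ n • x ∈ Submodule.span A (T : Set M) := by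
  classical
  have hstep : ∀ x : M, ∃ ν, ν ∈ Submodule.span A (T : Set M) ∧ ∃ y, p ^ n • x = ν + p ^ (n + 1) • y := by
    intro x
    obtain ⟨ν, hν, w, hw, hsum⟩ := Submodule.mem_sup.1 (h x)
    obtain ⟨y, rfl⟩ := (mem_spanSingleton_smul_top (p ^ (n + 1)) w).1 hw
    exact ⟨ν, hν, y, hsum.symm⟩
  choose ν hνmem y hy using hstep
  intro x
  -- iterate
  set xs : ℕ → M := fun j => Nat.rec x (fun _ xj => y xj) j with hxs
  have hxs0 : xs 0 = x := rfl
  have hxssucc : ∀ j, xs (j + 1) = y (xs j) := fun j => rfl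
  have hiter : ∀ m : ℕ, p ^ n • x
      = (∑ j ∈ Finset.range m, p ^ j • ν (xs j)) + p ^ m • (p ^ n • xs m) := by
    intro m
    induction m with
    | zero => simp [hxs0]
    | succ m ih =>
      rw [ih, Finset.sum_range_succ]
      have : p ^ m • (p ^ n • xs m) = p ^ m • ν (xs m) + p ^ (m + 1) • (p ^ n • xs (m + 1)) := by
        rw [hy (xs m), smul_add, ← hxssucc]
        congr 1
        rw [smul_smul, smul_smul, ← pow_add, ← pow_add]
        have hexp : m + (n + 1) = m + 1 + n := by omega
        rw [hexp]
      rw [this, add_assoc]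
  -- coefficients
  have hcoef : ∀ j : ℕ, ∃ f : M → A, ∑ t ∈ T, f t • t = ν (xs j) := fun j =>
    (Submodule.mem_span_finset.1 (hνmem (xs j))).imp fun _ h => h.2
  choose fs hfs using hcoef
  set g : M → ℕ → A := fun t m => ∑ j ∈ Finset.range m, p ^ j * fs j t with hg
  have hIA : ∀ m : ℕ, ((Ideal.span {p}) ^ m • ⊤ : Submodule A A) = Ideal.span {p ^ m} := by
    intro m
    rw [Ideal.span_singleton_pow, Ideal.smul_eq_mul, Ideal.mul_top]
  have hcauchy : ∀ t : M, ∀ {m k : ℕ}, m ≤ k →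
      g t m ≡ g t k [SMOD ((Ideal.span {p}) ^ m • ⊤ : Submodule A A)] := by
    intro t m k hmk
    rw [SModEq.sub_mem, hIA]
    have : g t k - g t m = ∑ j ∈ Finset.Ico m k, p ^ j * fs j t := by
      rw [hg]
      rw [← Finset.sum_Ico_eq_sub _ hmk]
    rw [← neg_sub, this]
    refine neg_mem (Submodule.sum_mem _ ?_)
    intro j hj
    obtain ⟨hj1, _⟩ := Finset.mem_Ico.1 hj
    have : p ^ j * fs j t = p ^ m * (p ^ (j - m) * fs j t) := by
      rw [← mul_assoc, ← pow_add]
      congr 2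
      omega
    rw [this]
    exact Ideal.mul_mem_right _ _ (Ideal.subset_span rfl)
  have hlim : ∀ t : M, ∃ L : A, ∀ m : ℕ,
      g t m ≡ L [SMOD ((Ideal.span {p}) ^ m • ⊤ : Submodule A A)] := by
    intro t
    exact IsPrecomplete.prec hcA.toIsPrecomplete (fun {m k} hmk => hcauchy t hmk)
  choose L hL using hlim
  set w : M := ∑ t ∈ T, L t • t with hw
  have hwmem : w ∈ Submodule.span A (T : Set M) :=
    Submodule.sum_mem _ fun t ht => Submodule.smul_mem _ _ (Submodule.subset_span ht)
  -- partial sums in M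
  have hswap : ∀ m : ℕ, (∑ j ∈ Finset.range m, p ^ j • ν (xs j)) = ∑ t ∈ T, g t m • t := by
    intro m
    have : ∀ j ∈ Finset.range m, p ^ j • ν (xs j) = ∑ t ∈ T, (p ^ j * fs j t) • t := by
      intro j _
      rw [← hfs j, Finset.smul_sum]
      exact Finset.sum_congr rfl fun t _ => by rw [smul_smul]
    rw [Finset.sum_congr rfl this, Finset.sum_comm]
    refine Finset.sum_congr rfl fun t _ => ?_
    rw [hg, Finset.sum_smul]
  have hdiff : ∀ m : ℕ, p ^ n • x - w ∈ ((Ideal.span {p}) ^ m • ⊤ : Submodule A M) := by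
    intro m
    have h1 : p ^ n • x - (∑ t ∈ T, g t m • t) ∈ ((Ideal.span {p}) ^ m • ⊤ : Submodule A M) := by
      rw [← hswap m]
      have := hiter m
      have heq : p ^ n • x - (∑ j ∈ Finset.range m, p ^ j • ν (xs j)) = p ^ m • (p ^ n • xs m) := by
        rw [this]; abel
      rw [heq]
      exact Submodule.smul_mem_smul (by rw [Ideal.span_singleton_pow]; exact Ideal.subset_span rfl)
        trivial
    have h2 : (∑ t ∈ T, g t m • t) - w ∈ ((Ideal.span {p}) ^ m • ⊤ : Submodule A M) := by
      rw [hw, ← Finset.sum_sub_distrib]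
      refine Submodule.sum_mem _ fun t _ => ?_
      rw [← sub_smul]
      have hmem : g t m - L t ∈ (Ideal.span {p}) ^ m := by
        have := (SModEq.sub_mem).1 (hL t m)
        rw [hIA] at this
        rw [← Ideal.span_singleton_pow] at this
        exact this
      exact Submodule.smul_mem_smul hmem trivial
    have := Submodule.add_mem _ h1 h2
    simpa using this
  have hzero : p ^ n • x - w = 0 := by
    refine IsHausdorff.haus hcM.toIsHausdorff _ fun m => ?_
    rw [SModEq.zero]
    exact hdiff m
  have : p ^ n • x = w := by rw [← sub_eq_zero]; exact hzero
  rw [this]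
  exact hwmem

/-- Flat descent of finite generation up to isogeny: if `B ⊗_A M` contains a finitely
generated `B`-submodule `N'` with `p^n·(B ⊗_A M) ⊆ N'`, then `M` contains a finitely
generated `A`-submodule `N` with `p^n·M ⊆ N`. Here `B/p^{n+1}B` is faithfully flat over
`A/p^{n+1}A`, `A` and `M` are `p`-adically complete and separated, and `p` is a
non-zero-divisor on `M`. -/
theorem stmt_12 (p : ℕ) (hp : p.Prime) (n : ℕ) {A B : Type*} [CommRing A] [CommRing B]
    [Algebra A B]
    (hff : @Module.FaithfullyFlat (A ⧸ Ideal.span {(p : A) ^ (n + 1)})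
      (B ⧸ Ideal.span {(p : B) ^ (n + 1)}) _ _
      (inducedQuotMap (algebraMap A B) p (n + 1)).toModule)
    (hcA : IsAdicComplete (Ideal.span {(p : A)}) A)
    {M : Type*} [AddCommGroup M] [Module A M]
    (hcM : IsAdicComplete (Ideal.span {(p : A)}) M)
    (hreg : ∀ x : M, (p : A) • x = 0 → x = 0)
    (hN' : ∃ N' : Submodule B (B ⊗[A] M), N'.FG ∧ ∀ y : B ⊗[A] M, (p : B) ^ n • y ∈ N') :
    ∃ N : Submodule A M, N.FG ∧ ∀ x : M, (p : A) ^ n • x ∈ N := by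
  classical
  obtain ⟨N', hfg, hN'⟩ := hN'
  -- Step 1: a finite set T of elements of M such that N' ≤ span B {1 ⊗ t, t ∈ T}
  have step1 : ∀ x : B ⊗[A] M, ∃ T : Finset M,
      x ∈ Submodule.span B ((fun m => (1 : B) ⊗ₜ[A] m) '' ↑T) := by
    intro x
    induction x using TensorProduct.induction_on with
    | zero => exact ⟨∅, Submodule.zero_mem _⟩
    | tmul b m =>
      refine ⟨{m}, ?_⟩
      have h1 : (1 : B) ⊗ₜ[A] m ∈
          Submodule.span B ((fun m' => (1 : B) ⊗ₜ[A] m') '' ↑({m} : Finset M)) :=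
        Submodule.subset_span ⟨m, Finset.mem_coe.2 (Finset.mem_singleton_self m), rfl⟩
      have h2 := Submodule.smul_mem _ b h1
      rwa [TensorProduct.smul_tmul', smul_eq_mul, mul_one] at h2
    | add x y hx hy =>
      obtain ⟨T1, h1⟩ := hx
      obtain ⟨T2, h2⟩ := hy
      refine ⟨T1 ∪ T2, Submodule.add_mem _ ?_ ?_⟩
      · exact Submodule.span_mono (Set.image_mono (by simp [Finset.coe_subset])) h1
      · exact Submodule.span_mono (Set.image_mono (by simp [Finset.coe_subset])) h2
  obtain ⟨s, hs⟩ := hfg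
  choose Tf hTf using step1
  set T : Finset M := s.biUnion Tf with hT
  have hsT : ∀ g ∈ s, g ∈ Submodule.span B ((fun m => (1 : B) ⊗ₜ[A] m) '' ↑T) := by
    intro g hg
    refine Submodule.span_mono (Set.image_mono ?_) (hTf g)
    intro t ht
    exact Finset.mem_coe.2 (Finset.mem_biUnion.2 ⟨g, hg, ht⟩)
  have hNle : N' ≤ Submodule.span B ((fun m => (1 : B) ⊗ₜ[A] m) '' ↑T) := by
    rw [← hs]
    exact Submodule.span_le.2 fun g hg => hsT g hg
  have htensor : ∀ y : B ⊗[A] M,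
      (p : B) ^ n • y ∈ Submodule.span B ((fun m => (1 : B) ⊗ₜ[A] m) '' ↑T) := fun y =>
    hNle (hN' y)
  have hkey := descent_key p n hff T htensor
  have hfinal := complete_key (p : A) n hcA hcM T hkey
  exact ⟨Submodule.span A (T : Set M), Submodule.fg_span T.finite_toSet, hfinal⟩
end

section
/- Let p be a prime and φ : A → B a homomorphism of commutative rings such that: p is a non-zero-divisor in A and in B; A and B are p-adically complete and separated; and the induced homomorphism A/p^r A → B/p^r B is faithfully flat for every r ≥ 1. Let C := lim_r (B ⊗_A B)/p^r(B ⊗_A B) be the p-adic completion of B ⊗_A B, and let u, v : B → C be the composites of b ↦ b⊗1 and b ↦ 1⊗b with the canonical map B ⊗_A B → C. Then φ is injective and its image equals {b ∈ B : u(b) = v(b)}; equivalently, the sequence 0 → A → B → C, with second map b ↦ u(b) − v(b), is exact. -/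
open scoped TensorProduct

open scoped TensorProduct
open TensorProduct

section FF

variable (R S : Type*) [CommRing R] [CommRing S] [Algebra R S]

lemma ff_injective [Module.FaithfullyFlat R S] :
    Function.Injective (algebraMap R S) := by
  set f : R →ₗ[R] S := Algebra.linearMap R S with hf
  have hcomp : (LinearMap.mul' R S) ∘ₗ (f.lTensor S) = (TensorProduct.rid R S).toLinearMap := by
    apply TensorProduct.ext'
    intro s r
    simp [f, Algebra.smul_def, mul_comm]
  have hex : Function.Exact ((0 : PUnit.{1} →ₗ[R] R).lTensor S) (f.lTensor S) := by
    intro y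
    constructor
    · intro hy
      have : (TensorProduct.rid R S).toLinearMap y = 0 := by
        rw [← hcomp, LinearMap.comp_apply, hy, map_zero]
      have hy0 : y = 0 := by
        have := congrArg (TensorProduct.rid R S).symm this
        simpa using this
      exact ⟨0, by simp [hy0]⟩
    · rintro ⟨w, rfl⟩
      rw [LinearMap.lTensor_zero]
      simp
  have hexact : Function.Exact (0 : PUnit.{1} →ₗ[R] R) f :=
    Module.FaithfullyFlat.lTensor_reflects_exact R S _ _ hex
  rw [injective_iff_map_eq_zero]
  intro a ha
  obtain ⟨w, hw⟩ := (hexact a).mp (by simpa [f] using ha)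
  simpa using hw.symm

lemma descent_range [Module.FaithfullyFlat R S] {s : S}
    (h : s ⊗ₜ[R] (1 : S) = (1 : S) ⊗ₜ[R] s) : s ∈ Set.range (algebraMap R S) := by
  set f : R →ₗ[R] S := Algebra.linearMap R S with hf
  set d : S →ₗ[R] S ⊗[R] S :=
    (TensorProduct.mk R S S).flip 1 - TensorProduct.mk R S S 1 with hd
  set c : S ⊗[R] (S ⊗[R] S) →ₗ[R] S ⊗[R] S :=
    ((LinearMap.mul' R S).rTensor S) ∘ₗ (TensorProduct.assoc R S S S).symm.toLinearMap with hc
  have key : c ∘ₗ (d.lTensor S) =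
      ((TensorProduct.mk R S S).flip 1) ∘ₗ (LinearMap.mul' R S) - LinearMap.id := by
    apply TensorProduct.ext'
    intro x y
    simp only [LinearMap.comp_apply, LinearMap.lTensor_tmul, LinearMap.sub_apply,
      LinearMap.flip_apply, TensorProduct.mk_apply, LinearMap.id_apply, c, d,
      tmul_sub, map_sub, LinearEquiv.coe_coe, TensorProduct.assoc_symm_tmul,
      LinearMap.rTensor_tmul, LinearMap.mul'_apply, mul_one]
  have hex : Function.Exact (f.lTensor S) (d.lTensor S) := by
    intro y
    constructor
    · intro hy
      refine ⟨(LinearMap.mul' R S y) ⊗ₜ (1 : R), ?_⟩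
      have := congrArg c hy
      rw [← LinearMap.comp_apply, key, map_zero] at this
      rw [LinearMap.sub_apply] at this
      have hy2 : (LinearMap.mul' R S y) ⊗ₜ[R] (1 : S) = y := by
        have := sub_eq_zero.mp this
        simpa using this
      simpa [f] using hy2
    · rintro ⟨w, rfl⟩
      rw [← LinearMap.comp_apply, ← LinearMap.lTensor_comp]
      have hdf : d ∘ₗ f = 0 := by
        apply LinearMap.ext
        intro r
        simp only [LinearMap.comp_apply, LinearMap.zero_apply, d, f,
          LinearMap.sub_apply, LinearMap.flip_apply, TensorProduct.mk_apply,
          Algebra.linearMap_apply]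
        rw [Algebra.algebraMap_eq_smul_one, TensorProduct.smul_tmul, sub_self]
      rw [hdf, LinearMap.lTensor_zero, LinearMap.zero_apply]
  have hexact : Function.Exact f d :=
    Module.FaithfullyFlat.lTensor_reflects_exact R S _ _ hex
  have hds : d s = 0 := by
    simp [d, h]
  obtain ⟨r, hr⟩ := (hexact s).mp hds
  exact ⟨r, by simpa [f] using hr⟩

end FF

section Step

variable {A B : Type*} [CommRing A] [CommRing B] [Algebra A B]

lemma induced_injective (p r : ℕ)
    (hffr : @Module.FaithfullyFlat (A ⧸ Ideal.span {(p : A) ^ r}) (B ⧸ Ideal.span {(p : B) ^ r})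
        _ _ (inducedQuotMap (algebraMap A B) p r).toModule) :
    Function.Injective (inducedQuotMap (algebraMap A B) p r) := by
  letI : Algebra (A ⧸ Ideal.span {(p : A) ^ r}) (B ⧸ Ideal.span {(p : B) ^ r}) :=
    (inducedQuotMap (algebraMap A B) p r).toAlgebra
  letI : Module.FaithfullyFlat (A ⧸ Ideal.span {(p : A) ^ r})
      (B ⧸ Ideal.span {(p : B) ^ r}) := hffr
  exact ff_injective (A ⧸ Ideal.span {(p : A) ^ r}) (B ⧸ Ideal.span {(p : B) ^ r})

lemma step_r (p r : ℕ)
    (hffr : @Module.FaithfullyFlat (A ⧸ Ideal.span {(p : A) ^ r}) (B ⧸ Ideal.span {(p : B) ^ r})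
        _ _ (inducedQuotMap (algebraMap A B) p r).toModule)
    {b : B} (hb : (b ⊗ₜ[A] (1 : B) - (1 : B) ⊗ₜ[A] b) ∈ Ideal.span {((p : B ⊗[A] B)) ^ r}) :
    ∃ a : A, b - algebraMap A B a ∈ Ideal.span {(p : B) ^ r} := by
  letI : Algebra (A ⧸ Ideal.span {(p : A) ^ r}) (B ⧸ Ideal.span {(p : B) ^ r}) :=
    (inducedQuotMap (algebraMap A B) p r).toAlgebra
  letI : Module.FaithfullyFlat (A ⧸ Ideal.span {(p : A) ^ r})
      (B ⧸ Ideal.span {(p : B) ^ r}) := hffr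
  set Rr := A ⧸ Ideal.span {(p : A) ^ r} with hRr
  set Sr := B ⧸ Ideal.span {(p : B) ^ r} with hSr
  letI : Algebra A (Sr ⊗[Rr] Sr) :=
    ((algebraMap Rr (Sr ⊗[Rr] Sr)).comp (algebraMap A Rr)).toAlgebra
  have halg : ∀ a : A, algebraMap A (Sr ⊗[Rr] Sr) a =
      (Ideal.Quotient.mk (Ideal.span {(p : B) ^ r}) (algebraMap A B a)) ⊗ₜ[Rr] (1 : Sr) := by
    intro a
    show (algebraMap Rr (Sr ⊗[Rr] Sr)) (algebraMap A Rr a) = _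
    rw [Algebra.TensorProduct.algebraMap_apply]
    have h1 : (algebraMap Rr Sr) ((algebraMap A Rr) a)
        = Ideal.Quotient.mk (Ideal.span {(p : B) ^ r}) (algebraMap A B a) := by
      show inducedQuotMap (algebraMap A B) p r (Ideal.Quotient.mk (Ideal.span {(p : A) ^ r}) a)
        = _
      rw [inducedQuotMap, Ideal.quotientMap_mk]
    rw [h1]
  let g : B →ₐ[A] Sr ⊗[Rr] Sr :=
    { toRingHom := (Algebra.TensorProduct.includeLeftRingHom (R := Rr) (A := Sr)
        (B := Sr)).comp (Ideal.Quotient.mk (Ideal.span {(p : B) ^ r})),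
      commutes' := fun a => by
        show (Ideal.Quotient.mk (Ideal.span {(p : B) ^ r}) (algebraMap A B a)) ⊗ₜ[Rr] (1 : Sr)
          = _
        exact (halg a).symm }
  let h : B →ₐ[A] Sr ⊗[Rr] Sr :=
    { toRingHom := (Algebra.TensorProduct.includeRight (R := Rr) (A := Sr)
        (B := Sr)).toRingHom.comp (Ideal.Quotient.mk (Ideal.span {(p : B) ^ r})),
      commutes' := fun a => by
        show (1 : Sr) ⊗ₜ[Rr] (Ideal.Quotient.mk (Ideal.span {(p : B) ^ r}) (algebraMap A B a)) = _
        rw [halg a]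
        have hsm : (Ideal.Quotient.mk (Ideal.span {(p : B) ^ r}) (algebraMap A B a))
            = (Ideal.Quotient.mk (Ideal.span {(p : A) ^ r}) a) • (1 : Sr) := by
          rw [Algebra.smul_def, mul_one]
          show _ = inducedQuotMap (algebraMap A B) p r (Ideal.Quotient.mk _ a)
          rw [inducedQuotMap, Ideal.quotientMap_mk]
        rw [hsm, ← TensorProduct.smul_tmul] }
  let Ψ : B ⊗[A] B →ₐ[A] Sr ⊗[Rr] Sr :=
    Algebra.TensorProduct.lift g h (fun x y => Commute.all _ _)
  have hpT : ((p : Sr ⊗[Rr] Sr)) ^ r = 0 := by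
    have h1 : ((p : Rr)) ^ r = 0 := by
      rw [show ((p : Rr)) = Ideal.Quotient.mk _ ((p : A)) from (map_natCast _ p).symm, ← map_pow,
        Ideal.Quotient.eq_zero_iff_mem]
      exact Ideal.subset_span rfl
    calc ((p : Sr ⊗[Rr] Sr)) ^ r = algebraMap Rr (Sr ⊗[Rr] Sr) (((p : Rr)) ^ r) := by
          rw [map_pow, map_natCast]
      _ = 0 := by rw [h1, map_zero]
  obtain ⟨x, hx⟩ := Ideal.mem_span_singleton'.mp hb
  have hΨ : Ψ (b ⊗ₜ[A] (1 : B) - (1 : B) ⊗ₜ[A] b) = 0 := by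
    rw [← hx, map_mul, map_pow, map_natCast, hpT, mul_zero]
  have hdiff : (Ideal.Quotient.mk (Ideal.span {(p : B) ^ r}) b) ⊗ₜ[Rr] (1 : Sr)
      = (1 : Sr) ⊗ₜ[Rr] (Ideal.Quotient.mk (Ideal.span {(p : B) ^ r}) b) := by
    have := hΨ
    rw [map_sub, Algebra.TensorProduct.lift_tmul, Algebra.TensorProduct.lift_tmul,
      map_one, map_one, mul_one, one_mul] at this
    have h2 : g b = h b := sub_eq_zero.mp this
    exact h2
  obtain ⟨abar, habar⟩ := descent_range Rr Sr hdiff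
  obtain ⟨a, rfl⟩ := Ideal.Quotient.mk_surjective abar
  refine ⟨a, ?_⟩
  have : Ideal.Quotient.mk (Ideal.span {(p : B) ^ r}) (algebraMap A B a)
      = Ideal.Quotient.mk (Ideal.span {(p : B) ^ r}) b := by
    rw [← habar]
    show _ = inducedQuotMap (algebraMap A B) p r (Ideal.Quotient.mk _ a)
    rw [inducedQuotMap, Ideal.quotientMap_mk]
  have h3 := (Ideal.Quotient.eq).mp this
  have := neg_mem h3
  simpa using this

end Step

/-- Let `φ : A → B` be a homomorphism of `p`-adically complete and separated rings (with `p`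
a non-zero-divisor in each) which is faithfully flat modulo every power of `p`. Then `φ` is
injective and its image is the equalizer of the two maps `u, v : B → C` into the `p`-adic
completion `C` of `B ⊗_A B`, i.e. the set of `b ∈ B` with `b ⊗ 1 − 1 ⊗ b` lying in the
kernel `⋂_r p^r·(B ⊗_A B)` of `B ⊗_A B → C`. -/
theorem stmt_13 (p : ℕ) (hp : p.Prime) {A B : Type*} [CommRing A] [CommRing B] [Algebra A B]
    (hregA : ∀ x : A, (p : A) * x = 0 → x = 0)
    (hregB : ∀ x : B, (p : B) * x = 0 → x = 0)
    (hcA : IsAdicComplete (Ideal.span {(p : A)}) A)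
    (hcB : IsAdicComplete (Ideal.span {(p : B)}) B)
    (hff : ∀ r : ℕ, 1 ≤ r →
      @Module.FaithfullyFlat (A ⧸ Ideal.span {(p : A) ^ r}) (B ⧸ Ideal.span {(p : B) ^ r})
        _ _ (inducedQuotMap (algebraMap A B) p r).toModule) :
    Function.Injective (algebraMap A B) ∧
    {b : B | ∀ r : ℕ,
        (b ⊗ₜ[A] (1 : B) - (1 : B) ⊗ₜ[A] b) ∈ Ideal.span {((p : B ⊗[A] B)) ^ r}} =
      Set.range (algebraMap A B) := by
  have hIA : ∀ n : ℕ, ((Ideal.span {(p : A)}) ^ n • (⊤ : Submodule A A))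
      = Ideal.span {(p : A) ^ n} := fun n => by
    rw [smul_eq_mul, Ideal.mul_top, Ideal.span_singleton_pow]
  have hIB : ∀ n : ℕ, ((Ideal.span {(p : B)}) ^ n • (⊤ : Submodule B B))
      = Ideal.span {(p : B) ^ n} := fun n => by
    rw [smul_eq_mul, Ideal.mul_top, Ideal.span_singleton_pow]
  have hinj : Function.Injective (algebraMap A B) := by
    rw [injective_iff_map_eq_zero]
    intro a ha
    refine hcA.toIsHausdorff.haus a fun n => ?_
    rw [SModEq.zero]
    show a ∈ ((Ideal.span {(p : A)}) ^ n • (⊤ : Submodule A A))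
    rw [hIA n]
    rcases Nat.eq_zero_or_pos n with hn | hn
    · subst hn
      rw [pow_zero, Ideal.span_singleton_one]
      exact Submodule.mem_top
    · have hi := induced_injective p n (hff n hn)
      have h0 : inducedQuotMap (algebraMap A B) p n
          (Ideal.Quotient.mk (Ideal.span {(p : A) ^ n}) a) = 0 := by
        rw [inducedQuotMap, Ideal.quotientMap_mk, ha, map_zero]
      have h1 := hi (by rw [h0, map_zero] :
        inducedQuotMap (algebraMap A B) p n (Ideal.Quotient.mk (Ideal.span {(p : A) ^ n}) a)
          = inducedQuotMap (algebraMap A B) p n 0)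
      rwa [Ideal.Quotient.eq_zero_iff_mem] at h1
  refine ⟨hinj, ?_⟩
  ext b
  simp only [Set.mem_setOf_eq, Set.mem_range]
  constructor
  · intro hb
    have hstep : ∀ r : ℕ, ∃ a : A, b - algebraMap A B a ∈ Ideal.span {(p : B) ^ r} := by
      intro r
      rcases Nat.eq_zero_or_pos r with hr | hr
      · subst hr
        exact ⟨0, by rw [pow_zero, Ideal.span_singleton_one]; exact Submodule.mem_top⟩
      · exact step_r p r (hff r hr) (hb r)
    choose v hv using hstep
    have h015 : ∀ {m n : ℕ}, m ≤ n → v m - v n ∈ Ideal.span {(p : A) ^ m} := by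
      intro m n hmn
      rcases Nat.eq_zero_or_pos m with hm | hm
      · subst hm
        rw [pow_zero, Ideal.span_singleton_one]
        exact Submodule.mem_top
      · have hBmem : algebraMap A B (v m - v n) ∈ Ideal.span {(p : B) ^ m} := by
          have h1 : b - algebraMap A B (v n) ∈ Ideal.span {(p : B) ^ m} :=
            Ideal.span_singleton_le_span_singleton.mpr (pow_dvd_pow _ hmn) (hv n)
          have h3 : algebraMap A B (v m - v n)
              = (b - algebraMap A B (v n)) - (b - algebraMap A B (v m)) := by
            rw [map_sub]; ring
          rw [h3]
          exact sub_mem h1 (hv m)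
        have hi := induced_injective p m (hff m hm)
        have h0 : inducedQuotMap (algebraMap A B) p m
            (Ideal.Quotient.mk (Ideal.span {(p : A) ^ m}) (v m - v n)) = 0 := by
          rw [inducedQuotMap, Ideal.quotientMap_mk, Ideal.Quotient.eq_zero_iff_mem]
          exact hBmem
        have h1 := hi (by rw [h0, map_zero] :
          inducedQuotMap (algebraMap A B) p m
            (Ideal.Quotient.mk (Ideal.span {(p : A) ^ m}) (v m - v n))
            = inducedQuotMap (algebraMap A B) p m 0)
        rwa [Ideal.Quotient.eq_zero_iff_mem] at h1
    obtain ⟨L, hL⟩ := hcA.toIsPrecomplete.prec (f := v) (fun {m n} h => by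
      rw [SModEq.sub_mem]
      show v m - v n ∈ ((Ideal.span {(p : A)}) ^ m • (⊤ : Submodule A A))
      rw [hIA m]
      exact h015 h)
    refine ⟨L, ?_⟩
    have hfin : b - algebraMap A B L = 0 := by
      refine hcB.toIsHausdorff.haus _ fun n => ?_
      rw [SModEq.zero]
      show b - algebraMap A B L ∈ ((Ideal.span {(p : B)}) ^ n • (⊤ : Submodule B B))
      rw [hIB n]
      have h1 : v n - L ∈ Ideal.span {(p : A) ^ n} := by
        have h2 := hL n
        rw [SModEq.sub_mem] at h2
        have h3 : v n - L ∈ ((Ideal.span {(p : A)}) ^ n • (⊤ : Submodule A A)) := h2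
        rwa [hIA n] at h3
      have h2 : algebraMap A B (v n) - algebraMap A B L ∈ Ideal.span {(p : B) ^ n} := by
        have h4 := spanPow_le_comap (algebraMap A B) p n h1
        rwa [Ideal.mem_comap, map_sub] at h4
      have h5 : b - algebraMap A B L
          = (b - algebraMap A B (v n)) + (algebraMap A B (v n) - algebraMap A B L) := by ring
      rw [h5]
      exact add_mem (hv n) h2
    exact (sub_eq_zero.mp hfin).symm
  · rintro ⟨a, rfl⟩ r
    have h1 : (algebraMap A B a) ⊗ₜ[A] (1 : B) - (1 : B) ⊗ₜ[A] (algebraMap A B a) = 0 := by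
      rw [Algebra.algebraMap_eq_smul_one, TensorProduct.smul_tmul, sub_self]
    rw [h1]
    exact Submodule.zero_mem _
end
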